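/- arXiv:2108.13566 — 6 statements merged into one kernel-verified Lean document; each statement's English description precedes it below -/
import Mathlib

section
/- Let y be a grid state and let a and b be functions to ℕ on the index sets of A(·) and B(·). If the triple (a,b,y) is neither A-plausible nor B-plausible, and D ∈ 𝒟⁺(x,y) is a positive domain with A(D) = a and B(D) = b, then y ≼ x. -/
/-! Grid diagram combinatorics: the complex of positive domains `CD₊`. -/

/-- A domain on the `n × n` toroidal grid from grid state `x` to grid state `y`,
avoiding the distinguished top-right square. -/
def IsGridDomain (n : ℕ) (x y : Equiv.Perm (ZMod n)) (D : ZMod n → ZMod n → ℤ) : Prop :=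
  D ((n : ZMod n) - 1) ((n : ZMod n) - 1) = 0 ∧
    ∀ i j : ZMod n,
      D i j - D (i - 1) j - D i (j - 1) + D (i - 1) (j - 1) =
        (if x i = j then 1 else 0) - (if y i = j then 1 else 0)

/-- A positive domain from `x` to `y`. -/
def IsGridPosDomain (n : ℕ) (x y : Equiv.Perm (ZMod n)) (D : ZMod n → ZMod n → ℤ) : Prop :=
  IsGridDomain n x y D ∧ ∀ i j : ZMod n, 0 ≤ D i j

/-- Membership in the cyclic interval `[a, b)` of `ZMod n`. -/
def cycInt (n : ℕ) (a b i : ZMod n) : Prop :=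
  ∃ k : ℕ, k < (b - a).val ∧ i = a + (k : ZMod n)

/-- A rectangle from `x` to `y`. -/
def IsGridRect (n : ℕ) (x y : Equiv.Perm (ZMod n)) (R : ZMod n → ZMod n → ℤ) : Prop :=
  IsGridPosDomain n x y R ∧
    ∃ i₁ i₂ : ZMod n, i₁ ≠ i₂ ∧
      y = x * Equiv.swap i₁ i₂ ∧
      (∀ i j : ZMod n,
        (cycInt n i₁ i₂ i ∧ cycInt n (x i₁) (x i₂) j → R i j = 1) ∧
        (¬(cycInt n i₁ i₂ i ∧ cycInt n (x i₁) (x i₂) j) → R i j = 0)) ∧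
      ∀ i : ZMod n, i ≠ i₁ → i ≠ i₂ → cycInt n i₁ i₂ i → ¬ cycInt n (x i₁) (x i₂) (x i)

/-- The horizontal annulus through row `j`. -/
def annH (n : ℕ) (j : ZMod n) : ZMod n → ZMod n → ℤ := fun _ j' => if j' = j then 1 else 0

/-- The vertical annulus through column `i`. -/
def annV (n : ℕ) (i : ZMod n) : ZMod n → ZMod n → ℤ := fun i' _ => if i' = i then 1 else 0

/-- `A(D)`: multiplicities of `D` in the rightmost column. -/
def colA (n : ℕ) (D : ZMod n → ZMod n → ℤ) : {j : ZMod n // j ≠ (n : ZMod n) - 1} → ℤ :=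
  fun j => D ((n : ZMod n) - 1) j.1

/-- `B(D)`: multiplicities of `D` in the topmost row. -/
def rowB (n : ℕ) (D : ZMod n → ZMod n → ℤ) : {i : ZMod n // i ≠ (n : ZMod n) - 1} → ℤ :=
  fun i => D i.1 ((n : ZMod n) - 1)

/-- The partial order on grid states: `y ≼ x` iff there is a positive domain from `x` to `y`
avoiding the rightmost column and the topmost row. -/
def gridLE (n : ℕ) (y x : Equiv.Perm (ZMod n)) : Prop :=
  ∃ D : ZMod n → ZMod n → ℤ, IsGridPosDomain n x y D ∧ colA n D = 0 ∧ rowB n D = 0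

/-- `(a, b, y)` is A-plausible: there is a rectangle `R` ending at `y` with
`0 < A(R) ≤ a`. -/
def APlausible (n : ℕ) (a : {j : ZMod n // j ≠ (n : ZMod n) - 1} → ℕ)
    (y : Equiv.Perm (ZMod n)) : Prop :=
  ∃ (z : Equiv.Perm (ZMod n)) (R : ZMod n → ZMod n → ℤ),
    IsGridRect n z y R ∧ colA n R ≠ 0 ∧ ∀ j, colA n R j ≤ (a j : ℤ)

/-- `(a, b, y)` is B-plausible: there is a rectangle `R` ending at `y` with
`0 < B(R) ≤ b`. -/
def BPlausible (n : ℕ) (b : {i : ZMod n // i ≠ (n : ZMod n) - 1} → ℕ)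
    (y : Equiv.Perm (ZMod n)) : Prop :=
  ∃ (z : Equiv.Perm (ZMod n)) (R : ZMod n → ZMod n → ℤ),
    IsGridRect n z y R ∧ rowB n R ≠ 0 ∧ ∀ i, rowB n R i ≤ (b i : ℤ)


/-!
Remove from `D` the annuli recorded by `A(D)` and `B(D)`. The result `E` is a domain from `x` to
`y` vanishing on the rightmost column and the topmost row, and telescoping the corner relation
shows that moving up (right) one step changes `E` by the number of `x`-points minus the number of
`y`-points in that row (column) weakly left of (below) the current square. It remains to show
`E ≥ 0`, since `E` then witnesses `y ≼ x`.

Non-plausibility says that wherever `A(D)` is positive at row `t`, the `y`-point in row `t + 1`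
lies left of the one in row `t`: otherwise the one-row rectangle between them, wrapping around the
rightmost column, would be an A-witness. Likewise for `B(D)` and columns. Now suppose `E` has a
negative minimum `μ`, attained closest to the origin at `(s, t)`; then the `y`-points of row `t`
and column `s` lie weakly left of and below `(s, t)`. Among minimizers with this property take one
farthest from the origin. Climbing up is possible while `A(D)` is positive and climbing right while
`B(D)` is positive, so both vanish there, and `D = E + A(D) + B(D) = μ < 0` at that square.
-/

namespace ZMod

variable {n : ℕ}

lemma natCast_self_sub_one (n : ℕ) : ((n : ZMod n) - 1) = -1 := by
  rw [natCast_self, zero_sub]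

variable [NeZero n]

lemma val_neg_one_of_neZero : (-1 : ZMod n).val = n - 1 := by
  obtain ⟨k, rfl⟩ := Nat.exists_eq_add_one_of_ne_zero (NeZero.ne n)
  exact val_neg_one k

lemma val_sub_eq_ite (a b : ZMod n) :
    (a - b).val = if b.val ≤ a.val then a.val - b.val else n + a.val - b.val := by
  split_ifs with h
  · exact val_sub h
  · have hsum := val_add (a - b) b
    rw [sub_add_cancel] at hsum
    have := val_lt (a - b)
    have := val_lt b
    by_cases hlt : (a - b).val + b.val < n
    · rw [Nat.mod_eq_of_lt hlt] at hsum
      omega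
    · rw [Nat.mod_eq_sub_mod (by omega), Nat.mod_eq_of_lt (by omega)] at hsum
      omega

lemma val_lt_val_add_one {t : ZMod n} (ht : t ≠ -1) : t.val < (t + 1).val := by
  have hn1 : n ≠ 1 := by
    rintro rfl
    exact ht (Subsingleton.elim _ _)
  have h := val_sub_eq_ite (t + 1) 1
  rw [add_sub_cancel_right, val_one'' hn1] at h
  split_ifs at h with h1
  · omega
  · refine absurd (val_injective n ?_) ht
    rw [val_neg_one_of_neZero]
    omega

lemma val_eq_iff_eq_natCast {k : ℕ} (hk : k < n) (p : ZMod n) : p.val = k ↔ p = k := by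
  rw [← val_cast_of_lt hk, (val_injective n).eq_iff, val_cast_of_lt hk]

end ZMod

lemma sub_neg_one_eq_of_sub_pred_eq {n : ℕ} [NeZero n] (g : ZMod n → ℤ) (p q : ZMod n)
    (hg : ∀ i, g i - g (i - 1) = (if p = i then 1 else 0) - (if q = i then 1 else 0))
    (i : ZMod n) :
    g i - g (-1) = (if p.val ≤ i.val then 1 else 0) - (if q.val ≤ i.val then 1 else 0) := by
  suffices h : ∀ k < n, g k - g (-1) = (if p.val ≤ k then 1 else 0) - (if q.val ≤ k then 1 else 0)
  · simpa [ZMod.natCast_zmod_val] using h i.val (ZMod.val_lt i)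
  intro k hk
  induction k with
  | zero =>
    have h0 := hg 0
    rw [zero_sub] at h0
    simp only [Nat.cast_zero, Nat.le_zero, ZMod.val_eq_zero, h0]
  | succ k ih =>
    have hstep := hg (k + 1 : ℕ)
    rw [Nat.cast_add_one, add_sub_cancel_right, ← Nat.cast_add_one] at hstep
    simp only [← ZMod.val_eq_iff_eq_natCast hk] at hstep
    have := ih (by omega)
    split_ifs at * <;> omega

section Extremal

variable {n : ℕ} [NeZero n] {x y : Equiv.Perm (ZMod n)} {E : ZMod n → ZMod n → ℤ} {μ : ℤ}

lemma val_symm_le_of_closest_min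
    (hvert : ∀ i j, E i j - E i (j - 1) =
      (if (x.symm j).val ≤ i.val then 1 else 0) - (if (y.symm j).val ≤ i.val then 1 else 0))
    (htop : ∀ i, E i (-1) = 0) (hμ : μ < 0) (hmin : ∀ i j, μ ≤ E i j) {s t : ZMod n}
    (hst : E s t = μ) (hclosest : ∀ t' : ZMod n, t'.val < t.val → E s t' ≠ μ) :
    (y.symm t).val ≤ s.val := by
  have hpred : μ < E s (t - 1) := by
    by_cases ht : t = 0
    · rw [ht, zero_sub, htop]
      exact hμ
    · have hlt := ZMod.val_lt_val_add_one (t := t - 1) (by simpa [sub_eq_iff_eq_add] using ht)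
      rw [sub_add_cancel] at hlt
      exact lt_of_le_of_ne (hmin s _) (hclosest _ hlt).symm
  have := hvert s t
  split_ifs at this <;> omega

lemma climb_of_descent
    (hvert : ∀ i j, E i j - E i (j - 1) =
      (if (x.symm j).val ≤ i.val then 1 else 0) - (if (y.symm j).val ≤ i.val then 1 else 0))
    (htop : ∀ i, E i (-1) = 0) (hμ : μ < 0) (hmin : ∀ i j, μ ≤ E i j) {s t : ZMod n}
    (hst : E s t = μ) (hys : (y.symm t).val ≤ s.val)
    (hdescent : t ≠ -1 → (y.symm (t + 1)).val < (y.symm t).val) :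
    E s (t + 1) = μ ∧ (y.symm (t + 1)).val ≤ s.val ∧ t.val < (t + 1).val := by
  have ht : t ≠ -1 := by
    rintro rfl
    rw [htop] at hst
    omega
  have hys' := (hdescent ht).trans_le hys
  have := hvert s (t + 1)
  rw [add_sub_cancel_right, if_pos hys'.le, hst] at this
  have := hmin s (t + 1)
  refine ⟨?_, hys'.le, ZMod.val_lt_val_add_one ht⟩
  split_ifs at * <;> omega

theorem nonneg_of_descents
    (hvert : ∀ i j, E i j - E i (j - 1) =
      (if (x.symm j).val ≤ i.val then 1 else 0) - (if (y.symm j).val ≤ i.val then 1 else 0))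
    (hhoriz : ∀ i j, E i j - E (i - 1) j =
      (if (x i).val ≤ j.val then 1 else 0) - (if (y i).val ≤ j.val then 1 else 0))
    (htop : ∀ i, E i (-1) = 0) (hright : ∀ j, E (-1) j = 0) (α β : ZMod n → ℤ)
    (hpos : ∀ i j, 0 ≤ E i j + α j + β i)
    (hα : ∀ t, t ≠ -1 → 0 < α t → (y.symm (t + 1)).val < (y.symm t).val)
    (hβ : ∀ s, s ≠ -1 → 0 < β s → (y (s + 1)).val < (y s).val) (i j : ZMod n) :
    0 ≤ E i j := by
  classical
  by_contra hneg
  obtain ⟨⟨s₀, t₀⟩, hmin⟩ := Finite.exists_min (fun p : ZMod n × ZMod n => E p.1 p.2)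
  set μ := E s₀ t₀
  have hμ : μ < 0 := (hmin (i, j)).trans_lt (not_le.1 hneg)
  replace hmin : ∀ i j, μ ≤ E i j := fun i j => hmin (i, j)
  let good (p : ZMod n × ZMod n) : Prop :=
    E p.1 p.2 = μ ∧ (y.symm p.2).val ≤ p.1.val ∧ (y p.1).val ≤ p.2.val
  have hgood : (Finset.univ.filter good).Nonempty := by
    obtain ⟨⟨s, t⟩, hst, hclosest⟩ := (Finset.univ.filter fun p => E p.1 p.2 = μ).exists_min_image
      (fun p => p.1.val + p.2.val) ⟨(s₀, t₀), by simp [μ]⟩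
    simp only [Finset.mem_filter, Finset.mem_univ, true_and, Prod.forall] at hst hclosest
    refine ⟨(s, t), Finset.mem_filter.2 ⟨Finset.mem_univ _, hst, ?_, ?_⟩⟩
    · exact val_symm_le_of_closest_min hvert htop hμ hmin hst
        fun t' (ht' : t'.val < t.val) he => by have := hclosest s t' he; omega
    · exact val_symm_le_of_closest_min (E := fun j i => E i j) (x := x.symm) (y := y.symm)
        (fun i j => hhoriz j i) hright hμ (fun i j => hmin j i) hst
        fun s' (hs' : s'.val < s.val) he => by have := hclosest s' t he; omega
  obtain ⟨⟨s, t⟩, hst, hfar⟩ := (Finset.univ.filter good).exists_max_image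
    (fun p => p.1.val + p.2.val) hgood
  simp only [Finset.mem_filter, Finset.mem_univ, true_and, Prod.forall, good] at hst hfar
  obtain ⟨hE, hys, hsy⟩ := hst
  have hαt : α t ≤ 0 := by
    by_contra! hαt
    obtain ⟨hE', hys', hlt⟩ :=
      climb_of_descent hvert htop hμ hmin hE hys fun ht => hα t ht hαt
    have := hfar s (t + 1) ⟨hE', hys', hsy.trans hlt.le⟩
    omega
  have hβs : β s ≤ 0 := by
    by_contra! hβs
    obtain ⟨hE', hsy', hlt⟩ :=
      climb_of_descent (E := fun j i => E i j) (x := x.symm) (y := y.symm)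
        (fun i j => hhoriz j i) hright hμ (fun i j => hmin j i) hE hsy fun hs => hβ s hs hβs
    have := hfar (s + 1) t ⟨hE', hys.trans hlt.le, hsy'⟩
    omega
  linarith [hpos s t]

end Extremal

/-- `D` minus `D (-1) j` copies of each horizontal annulus `H_(j)` and `D i (-1)` copies of each
vertical annulus `V_(i)`; here `-1 = n - 1` indexes the rightmost column and the topmost row. -/
def cutDomain (n : ℕ) (D : ZMod n → ZMod n → ℤ) : ZMod n → ZMod n → ℤ :=
  fun i j => D i j - D (-1) j - D i (-1)

namespace IsGridDomain

variable {n : ℕ} {x y : Equiv.Perm (ZMod n)} {D : ZMod n → ZMod n → ℤ}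

lemma neg_one_neg_one (hD : IsGridDomain n x y D) : D (-1) (-1) = 0 := by
  simpa [ZMod.natCast_self_sub_one] using hD.1

lemma cut (hD : IsGridDomain n x y D) : IsGridDomain n x y (cutDomain n D) := by
  refine ⟨?_, fun i j => ?_⟩
  · simp only [cutDomain, ZMod.natCast_self_sub_one, hD.neg_one_neg_one, sub_zero]
  · rw [← hD.2 i j]
    simp only [cutDomain]
    ring

lemma cutDomain_top_row (hD : IsGridDomain n x y D) (i : ZMod n) :
    cutDomain n D i (-1) = 0 := by
  simp [cutDomain, hD.neg_one_neg_one]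

lemma cutDomain_right_column (hD : IsGridDomain n x y D) (j : ZMod n) :
    cutDomain n D (-1) j = 0 := by
  simp [cutDomain, hD.neg_one_neg_one]

variable [NeZero n]

lemma cutDomain_sub_below (hD : IsGridDomain n x y D) (i j : ZMod n) :
    cutDomain n D i j - cutDomain n D i (j - 1) =
      (if (x.symm j).val ≤ i.val then 1 else 0) - (if (y.symm j).val ≤ i.val then 1 else 0) := by
  rw [← sub_neg_one_eq_of_sub_pred_eq (fun i => D i j - D i (j - 1)) (x.symm j) (y.symm j)
    (fun i => by simp only [Equiv.symm_apply_eq, eq_comm (a := j), ← hD.2 i j]; ring)]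
  simp only [cutDomain]
  ring

lemma cutDomain_sub_left (hD : IsGridDomain n x y D) (i j : ZMod n) :
    cutDomain n D i j - cutDomain n D (i - 1) j =
      (if (x i).val ≤ j.val then 1 else 0) - (if (y i).val ≤ j.val then 1 else 0) := by
  rw [← sub_neg_one_eq_of_sub_pred_eq (fun j => D i j - D (i - 1) j) (x i) (y i)
    (fun j => by rw [← hD.2 i j]; ring)]
  simp only [cutDomain]
  ring

end IsGridDomain

instance (n : ℕ) (a b i : ZMod n) : Decidable (cycInt n a b i) := by
  unfold cycInt
  infer_instance

section CyclicInterval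

variable {n : ℕ} [NeZero n] {a b : ZMod n}

lemma cycInt_iff_val_lt (i : ZMod n) : cycInt n a b i ↔ (i - a).val < (b - a).val := by
  constructor
  · rintro ⟨k, hk, rfl⟩
    rwa [add_sub_cancel_left, ZMod.val_cast_of_lt (hk.trans (ZMod.val_lt _))]
  · exact fun h => ⟨(i - a).val, h, by rw [ZMod.natCast_zmod_val, add_sub_cancel]⟩

lemma cycInt_neg_one_iff : cycInt n a b (-1) ↔ b.val < a.val := by
  have := ZMod.val_lt b
  have := ZMod.val_lt a
  rw [cycInt_iff_val_lt, ZMod.val_sub_eq_ite, ZMod.val_sub_eq_ite, ZMod.val_neg_one_of_neZero]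
  split_ifs <;> omega

lemma cycInt_add_one_iff (h1 : (1 : ZMod n) ≠ 0) (i : ZMod n) : cycInt n a (a + 1) i ↔ i = a := by
  rw [cycInt_iff_val_lt, add_sub_cancel_left, ZMod.val_one'' fun h => h1 (by subst h; rfl),
    Nat.lt_one_iff, ZMod.val_eq_zero, sub_eq_zero]

lemma ite_cycInt_sub_ite_cycInt_sub_one (hab : a ≠ b) (i : ZMod n) :
    ((if cycInt n a b i then 1 else 0) - (if cycInt n a b (i - 1) then 1 else 0) : ℤ) =
      (if i = a then 1 else 0) - (if i = b then 1 else 0) := by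
  have hd : (b - a).val ≠ 0 := by rwa [ne_eq, ZMod.val_eq_zero, sub_eq_zero, eq_comm]
  have := ZMod.val_lt (b - a)
  have hb : i = b ↔ (i - a).val = (b - a).val := by
    rw [(ZMod.val_injective n).eq_iff, sub_left_inj]
  have hn1 : n ≠ 1 := by
    rintro rfl
    exact hab (Subsingleton.elim _ _)
  have hpred := ZMod.val_sub_eq_ite (i - a) 1
  rw [sub_right_comm, ZMod.val_one'' hn1] at hpred
  simp only [cycInt_iff_val_lt, hpred, hb, ← sub_eq_zero (a := i) (b := a), ← ZMod.val_eq_zero]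
  split_ifs <;> omega

end CyclicInterval

def rectIndicator (n : ℕ) (i₁ i₂ j₁ j₂ : ZMod n) : ZMod n → ZMod n → ℤ :=
  fun i j => if cycInt n i₁ i₂ i ∧ cycInt n j₁ j₂ j then 1 else 0

lemma isGridRect_rectIndicator {n : ℕ} [NeZero n] (y : Equiv.Perm (ZMod n)) {i₁ i₂ : ZMod n} (hne : i₁ ≠ i₂)
    (hcorner : ¬(cycInt n i₁ i₂ (-1) ∧ cycInt n (y i₂) (y i₁) (-1)))
    (hempty : ∀ i, i ≠ i₁ → i ≠ i₂ → cycInt n i₁ i₂ i → ¬cycInt n (y i₂) (y i₁) (y i)) :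
    IsGridRect n (y * Equiv.swap i₁ i₂) y (rectIndicator n i₁ i₂ (y i₂) (y i₁)) := by
  set z := y * Equiv.swap i₁ i₂
  have hz₁ : z i₁ = y i₂ := by simp [z]
  have hz₂ : z i₂ = y i₁ := by simp [z]
  have hz : ∀ i, i ≠ i₁ → i ≠ i₂ → z i = y i := fun i h₁ h₂ => by
    simp [z, Equiv.swap_apply_of_ne_of_ne h₁ h₂]
  have hne' : y i₂ ≠ y i₁ := y.injective.ne hne.symm
  refine ⟨⟨⟨?_, fun i j => ?_⟩, fun i j => ?_⟩, i₁, i₂, hne, ?_, fun i j => ?_, ?_⟩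
  · simp only [rectIndicator, ZMod.natCast_self_sub_one, if_neg hcorner]
  · set f : ZMod n → ℤ := fun i => if cycInt n i₁ i₂ i then 1 else 0
    set g : ZMod n → ℤ := fun j => if cycInt n (y i₂) (y i₁) j then 1 else 0
    have hprod : ∀ i j, rectIndicator n i₁ i₂ (y i₂) (y i₁) i j = f i * g j :=
      fun i j => by simp only [rectIndicator, f, g, ite_zero_mul_ite_zero, mul_one]
    rw [hprod, hprod, hprod, hprod, show f i * g j - f (i - 1) * g j - f i * g (j - 1)
        + f (i - 1) * g (j - 1) = (f i - f (i - 1)) * (g j - g (j - 1)) by ring]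
    simp only [f, g, ite_cycInt_sub_ite_cycInt_sub_one hne, ite_cycInt_sub_ite_cycInt_sub_one hne']
    by_cases h₁ : i = i₁
    · subst h₁
      simp [hne, hz₁, eq_comm (a := j)]
    by_cases h₂ : i = i₂
    · subst h₂
      simp [h₁, hz₂, eq_comm (a := j)]
    · simp [h₁, h₂, hz i h₁ h₂]
  · unfold rectIndicator
    split_ifs <;> norm_num
  · rw [mul_assoc, Equiv.swap_mul_self, mul_one]
  · rw [hz₁, hz₂]
    exact ⟨fun h => if_pos h, fun h => if_neg h⟩
  · rw [hz₁, hz₂]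
    intro i h₁ h₂ hi
    rw [hz i h₁ h₂]
    exact hempty i h₁ h₂ hi

section Witnesses

variable {n : ℕ} [NeZero n]

/-- The witness is the one-row rectangle `[y⁻¹ (t + 1), y⁻¹ t) × {t}`, which wraps around the
rightmost column. -/
lemma aPlausible_of_ascent (a : {j : ZMod n // j ≠ (n : ZMod n) - 1} → ℕ)
    (y : Equiv.Perm (ZMod n)) {t : ZMod n} (ht : t ≠ (n : ZMod n) - 1) (hat : a ⟨t, ht⟩ ≠ 0)
    (hascent : ¬(y.symm (t + 1)).val < (y.symm t).val) : APlausible n a y := by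
  rw [ZMod.natCast_self_sub_one] at ht
  have := nontrivial_of_ne _ _ ht
  have h1 : (1 : ZMod n) ≠ 0 := one_ne_zero
  set i₁ := y.symm (t + 1)
  set i₂ := y.symm t
  have hy₁ : y i₁ = t + 1 := y.apply_symm_apply _
  have hy₂ : y i₂ = t := y.apply_symm_apply _
  have hne : i₁ ≠ i₂ := y.symm.injective.ne (by simp)
  have hwrap : cycInt n i₁ i₂ (-1) :=
    cycInt_neg_one_iff.2 (lt_of_le_of_ne (not_lt.1 hascent) ((ZMod.val_injective n).ne hne.symm))
  have hR : ∀ j, rectIndicator n i₁ i₂ (y i₂) (y i₁) (-1) j = if j = t then 1 else 0 := fun j => by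
    simp only [rectIndicator, hy₁, hy₂, cycInt_add_one_iff h1, hwrap, true_and]
  refine ⟨_, _, isGridRect_rectIndicator y hne ?_ ?_, fun h => ?_, fun j => ?_⟩
  · rw [hy₁, hy₂, cycInt_add_one_iff h1]
    exact fun h => ht h.2.symm
  · rw [hy₁, hy₂]
    intro i _ h₂ _ hi
    exact h₂ (y.injective (((cycInt_add_one_iff h1 _).1 hi).trans hy₂.symm))
  · have := congrFun h ⟨t, by rwa [ZMod.natCast_self_sub_one]⟩
    simp [colA, hR] at this
  · simp only [colA, ZMod.natCast_self_sub_one, hR]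
    split_ifs with hj
    · subst hj
      exact_mod_cast Nat.one_le_iff_ne_zero.2 hat
    · positivity

/-- The witness is the one-column rectangle `{s} × [y (s + 1), y s)`, which wraps around the
topmost row. -/
lemma bPlausible_of_ascent (b : {i : ZMod n // i ≠ (n : ZMod n) - 1} → ℕ)
    (y : Equiv.Perm (ZMod n)) {s : ZMod n} (hs : s ≠ (n : ZMod n) - 1) (hbs : b ⟨s, hs⟩ ≠ 0)
    (hascent : ¬(y (s + 1)).val < (y s).val) : BPlausible n b y := by
  rw [ZMod.natCast_self_sub_one] at hs
  have := nontrivial_of_ne _ _ hs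
  have h1 : (1 : ZMod n) ≠ 0 := one_ne_zero
  have hne : s ≠ s + 1 := by simp
  have hwrap : cycInt n (y (s + 1)) (y s) (-1) :=
    cycInt_neg_one_iff.2 (lt_of_le_of_ne (not_lt.1 hascent) ((ZMod.val_injective n).ne
      (y.injective.ne hne)))
  have hR : ∀ i, rectIndicator n s (s + 1) (y (s + 1)) (y s) i (-1) = if i = s then 1 else 0 :=
    fun i => by simp only [rectIndicator, cycInt_add_one_iff h1, hwrap, and_true]
  refine ⟨_, _, isGridRect_rectIndicator y hne ?_ ?_, fun h => ?_, fun i => ?_⟩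
  · rw [cycInt_add_one_iff h1]
    exact fun h => hs h.1.symm
  · exact fun i h₁ _ hi => absurd ((cycInt_add_one_iff h1 _).1 hi) h₁
  · have := congrFun h ⟨s, by rwa [ZMod.natCast_self_sub_one]⟩
    simp [rowB, hR] at this
  · simp only [rowB, ZMod.natCast_self_sub_one, hR]
    split_ifs with hi
    · subst hi
      exact_mod_cast Nat.one_le_iff_ne_zero.2 hbs
    · positivity

end Witnesses

/-- Lemma 3.5: if `(a, b, y)` is neither A-plausible nor B-plausible and `D ∈ 𝒟⁺(x, y)`
has `A(D) = a` and `B(D) = b`, then `y ≼ x`. -/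
theorem le_of_not_plausible (n : ℕ) (hn : 1 ≤ n)
    (x y : Equiv.Perm (ZMod n))
    (a : {j : ZMod n // j ≠ (n : ZMod n) - 1} → ℕ)
    (b : {i : ZMod n // i ≠ (n : ZMod n) - 1} → ℕ)
    (hnA : ¬ APlausible n a y) (hnB : ¬ BPlausible n b y)
    (D : ZMod n → ZMod n → ℤ) (hD : IsGridPosDomain n x y D)
    (hAeq : ∀ j, colA n D j = (a j : ℤ)) (hBeq : ∀ i, rowB n D i = (b i : ℤ)) :
    gridLE n y x := by
  have : NeZero n := ⟨by omega⟩
  obtain ⟨hD, hpos⟩ := hD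
  have hdescA : ∀ t, t ≠ -1 → 0 < D (-1) t → (y.symm (t + 1)).val < (y.symm t).val := by
    intro t ht hDt
    by_contra hascent
    rw [← ZMod.natCast_self_sub_one] at ht
    refine hnA (aPlausible_of_ascent a y ht ?_ hascent)
    have := hAeq ⟨t, ht⟩
    simp only [colA, ZMod.natCast_self_sub_one] at this
    omega
  have hdescB : ∀ s, s ≠ -1 → 0 < D s (-1) → (y (s + 1)).val < (y s).val := by
    intro s hs hDs
    by_contra hascent
    rw [← ZMod.natCast_self_sub_one] at hs
    refine hnB (bPlausible_of_ascent b y hs ?_ hascent)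
    have := hBeq ⟨s, hs⟩
    simp only [rowB, ZMod.natCast_self_sub_one] at this
    omega
  have hnonneg := nonneg_of_descents hD.cutDomain_sub_below hD.cutDomain_sub_left
    hD.cutDomain_top_row hD.cutDomain_right_column (D (-1)) (fun i => D i (-1))
    (fun i j => by simp only [cutDomain]; linarith [hpos i j]) hdescA hdescB
  refine ⟨cutDomain n D, ⟨hD.cut, hnonneg⟩, funext fun j => ?_, funext fun i => ?_⟩
  · simp [colA, hD.cutDomain_right_column]
  · simp [rowB, hD.cutDomain_top_row]
end

section
/- Let y be a grid state and let a and b be functions to ℕ on the index sets of A(·) and B(·). Then there exists a grid state m ∈ G^{a,b,y} such that for every grid state x, x ∈ G^{a,b,y} if and only if m ≼ x. Moreover, m equals the identity permutation if and only if a = 0, b = 0, and y is the identity permutation. -/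
open Finset Equiv



/-- The set `G^{a,b,y}` of states `x` admitting a positive domain to `y` with
`A(D) = a` and `B(D) = b`. -/
def Gset (n : ℕ) (a : {j : ZMod n // j ≠ (n : ZMod n) - 1} → ℕ)
    (b : {i : ZMod n // i ≠ (n : ZMod n) - 1} → ℕ) (y : Equiv.Perm (ZMod n)) :
    Set (Equiv.Perm (ZMod n)) :=
  {x | ∃ D : ZMod n → ZMod n → ℤ, IsGridPosDomain n x y D ∧
    (∀ j, colA n D j = (a j : ℤ)) ∧ (∀ i, rowB n D i = (b i : ℤ))}


namespace GD
variable (n : ℕ) [NeZero n]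

/-- the distinguished index `-1`. -/
lemma cast_pred : ((n - 1 : ℕ) : ZMod n) = (n : ZMod n) - 1 := by
  have h : 1 ≤ n := Nat.one_le_iff_ne_zero.mpr (NeZero.ne n)
  push_cast [Nat.cast_sub h]; ring

lemma val_c : ((n : ZMod n) - 1).val = n - 1 := by
  rw [← cast_pred, ZMod.val_cast_of_lt]
  have := NeZero.pos n; omega

lemma sub_one_val (i : ZMod n) :
    (i - 1).val = if i = 0 then n - 1 else i.val - 1 := by
  split_ifs with h
  · subst h; rw [zero_sub, show (-1 : ZMod n) = (n : ZMod n) - 1 by simp, val_c]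
  · have hv : 1 ≤ i.val := by
      rcases Nat.eq_zero_or_pos i.val with h0 | h0
      · exact absurd (by rw [← ZMod.natCast_rightInverse i, h0]; simp) h
      · exact h0
    have : i - 1 = ((i.val - 1 : ℕ) : ZMod n) := by
      rw [Nat.cast_sub hv, ZMod.natCast_rightInverse i]; simp
    rw [this, ZMod.val_cast_of_lt]
    have := ZMod.val_lt i; omega

/-- step-constancy around the cycle implies constant. -/
lemma cycle_const (g : ZMod n → ℤ) (h : ∀ i, g i = g (i - 1)) (i i' : ZMod n) : g i = g i' := by
  have key : ∀ (k : ℕ) (j : ZMod n), g (j + (k : ℕ)) = g j := by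
    intro k
    induction k with
    | zero => intro j; simp
    | succ k ih =>
      intro j
      have := h (j + ((k : ℕ) + 1))
      push_cast [Nat.cast_add] at this ⊢
      rw [show j + ((k:ZMod n) + 1) - 1 = j + (k:ZMod n) by ring] at this
      rw [this, ih]
  have : i' = i + ((i' - i).val : ℕ) := by
    rw [ZMod.natCast_rightInverse (i' - i)]; ring
  rw [this, key]


/-- reindex a sum over `ZMod n` of a function of `val` as a sum over `range n`. -/
lemma sum_val (f : ℕ → ℤ) : ∑ k : ZMod n, f k.val = ∑ K ∈ Finset.range n, f K := by
  refine Finset.sum_nbij' (i := fun k => k.val) (j := fun K => (K : ZMod n)) ?_ ?_ ?_ ?_ ?_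
  · intro k _; exact Finset.mem_range.mpr (ZMod.val_lt k)
  · intro K _; exact Finset.mem_univ _
  · intro k _; exact ZMod.natCast_rightInverse k
  · intro K hK; exact ZMod.val_cast_of_lt (Finset.mem_range.mp hK)
  · intro k _; rfl

lemma sum_perm_val (x : Equiv.Perm (ZMod n)) (f : ℕ → ℤ) :
    ∑ k : ZMod n, f (x k).val = ∑ K ∈ Finset.range n, f K := by
  rw [Equiv.sum_comp x (fun k => f k.val), sum_val]

/-- The rank matrix of a permutation, with `ℕ` indices. -/
def Kn (x : Equiv.Perm (ZMod n)) (I J : ℕ) : ℤ :=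
  ∑ k : ZMod n, if k.val ≤ I ∧ (x k).val ≤ J then 1 else 0

/-- The rank matrix with `ZMod` indices. -/
def KK (x : Equiv.Perm (ZMod n)) (i j : ZMod n) : ℤ := Kn n x i.val j.val

lemma Kn_nonneg (x : Equiv.Perm (ZMod n)) (I J : ℕ) : 0 ≤ Kn n x I J := by
  apply Finset.sum_nonneg; intro k _; split_ifs <;> norm_num

lemma count_le (J : ℕ) :
    (∑ K ∈ Finset.range n, if K ≤ J then (1 : ℤ) else 0) = (min n (J + 1) : ℕ) := by
  rw [Finset.sum_boole]
  have : (Finset.range n).filter (fun K => K ≤ J) = Finset.range (min n (J + 1)) := by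
    ext K; simp only [Finset.mem_filter, Finset.mem_range, Nat.lt_min]; omega
  rw [this]; simp

lemma Kn_le_left (x : Equiv.Perm (ZMod n)) (I J : ℕ) : Kn n x I J ≤ I + 1 := by
  have h1 : Kn n x I J ≤ ∑ k : ZMod n, if k.val ≤ I then (1:ℤ) else 0 := by
    apply Finset.sum_le_sum; intro k _; split_ifs <;> simp_all
  rw [sum_val n (fun K => if K ≤ I then (1:ℤ) else 0), count_le] at h1
  have : (min n (I+1) : ℤ) ≤ (I:ℤ) + 1 := by
    have := min_le_right n (I+1); exact_mod_cast Nat.cast_le.mpr this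
  omega

lemma Kn_le_right (x : Equiv.Perm (ZMod n)) (I J : ℕ) : Kn n x I J ≤ J + 1 := by
  have h1 : Kn n x I J ≤ ∑ k : ZMod n, if (x k).val ≤ J then (1:ℤ) else 0 := by
    apply Finset.sum_le_sum; intro k _; split_ifs <;> simp_all
  rw [sum_perm_val n x (fun K => if K ≤ J then (1:ℤ) else 0), count_le] at h1
  have : (min n (J+1) : ℤ) ≤ (J:ℤ) + 1 := by
    have := min_le_right n (J+1); exact_mod_cast Nat.cast_le.mpr this
  omega

lemma Kn_le_card (x : Equiv.Perm (ZMod n)) (I J : ℕ) : Kn n x I J ≤ n := by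
  have h1 : Kn n x I J ≤ ∑ _k : ZMod n, (1:ℤ) := by
    apply Finset.sum_le_sum; intro k _; split_ifs <;> norm_num
  simpa [ZMod.card] using h1

lemma Kn_mono_left (x : Equiv.Perm (ZMod n)) {I I' : ℕ} (h : I ≤ I') (J : ℕ) :
    Kn n x I J ≤ Kn n x I' J := by
  apply Finset.sum_le_sum; intro k _; split_ifs <;> simp_all <;> omega

lemma Kn_mono_right (x : Equiv.Perm (ZMod n)) (I : ℕ) {J J' : ℕ} (h : J ≤ J') :
    Kn n x I J ≤ Kn n x I J' := by
  apply Finset.sum_le_sum; intro k _; split_ifs <;> simp_all <;> omega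

lemma Kn_boundary_left (x : Equiv.Perm (ZMod n)) (J : ℕ) :
    Kn n x (n - 1) J = (min n (J + 1) : ℕ) := by
  have : Kn n x (n-1) J = ∑ k : ZMod n, if (x k).val ≤ J then (1:ℤ) else 0 := by
    apply Finset.sum_congr rfl; intro k _
    have hk := ZMod.val_lt k
    have : k.val ≤ n - 1 := by omega
    simp [this]
  rw [this, sum_perm_val n x (fun K => if K ≤ J then (1:ℤ) else 0), count_le]

lemma Kn_boundary_right (x : Equiv.Perm (ZMod n)) (I : ℕ) :
    Kn n x I (n - 1) = (min n (I + 1) : ℕ) := by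
  have : Kn n x I (n-1) = ∑ k : ZMod n, if k.val ≤ I then (1:ℤ) else 0 := by
    apply Finset.sum_congr rfl; intro k _
    have hk := ZMod.val_lt (x k)
    have : (x k).val ≤ n - 1 := by omega
    simp [this]
  rw [this, sum_val n (fun K => if K ≤ I then (1:ℤ) else 0), count_le]

lemma Kn_lip_left (x : Equiv.Perm (ZMod n)) (I I' J : ℕ) :
    Kn n x I' J ≤ Kn n x I J + ((I' - I : ℕ) : ℤ) := by
  rcases le_or_gt I' I with h | h
  · have h1 := Kn_mono_left n x h J
    have h2 : (0:ℤ) ≤ ((I' - I : ℕ) : ℤ) := Int.natCast_nonneg _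
    omega
  · have h2 : (∑ k : ZMod n, if I < k.val ∧ k.val ≤ I' then (1:ℤ) else 0) ≤ ((I' - I : ℕ) : ℤ) := by
      rw [sum_val n (fun K => if I < K ∧ K ≤ I' then (1:ℤ) else 0), Finset.sum_boole]
      have hss : (Finset.range n).filter (fun K => I < K ∧ K ≤ I') ⊆ Finset.Ico (I+1) (I'+1) := by
        intro K hK
        simp only [Finset.mem_filter, Finset.mem_range, Finset.mem_Ico] at hK ⊢
        omega
      have hc := Finset.card_le_card hss
      rw [Nat.card_Ico] at hc
      have : (I' + 1) - (I + 1) ≤ I' - I := by omega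
      exact_mod_cast Nat.cast_le.mpr (le_trans hc this)
    have h3 : Kn n x I' J - Kn n x I J ≤
        ∑ k : ZMod n, if I < k.val ∧ k.val ≤ I' then (1:ℤ) else 0 := by
      rw [Kn, Kn, ← Finset.sum_sub_distrib]
      apply Finset.sum_le_sum; intro k _
      split_ifs <;> omega
    omega

lemma Kn_lip_right (x : Equiv.Perm (ZMod n)) (I J J' : ℕ) :
    Kn n x I J' ≤ Kn n x I J + ((J' - J : ℕ) : ℤ) := by
  rcases le_or_gt J' J with h | h
  · have h1 := Kn_mono_right n x I h
    have h2 : (0:ℤ) ≤ ((J' - J : ℕ) : ℤ) := Int.natCast_nonneg _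
    omega
  · have h2 : (∑ k : ZMod n, if J < (x k).val ∧ (x k).val ≤ J' then (1:ℤ) else 0)
        ≤ ((J' - J : ℕ) : ℤ) := by
      rw [sum_perm_val n x (fun K => if J < K ∧ K ≤ J' then (1:ℤ) else 0), Finset.sum_boole]
      have hss : (Finset.range n).filter (fun K => J < K ∧ K ≤ J') ⊆ Finset.Ico (J+1) (J'+1) := by
        intro K hK
        simp only [Finset.mem_filter, Finset.mem_range, Finset.mem_Ico] at hK ⊢
        omega
      have hc := Finset.card_le_card hss
      rw [Nat.card_Ico] at hc
      have : (J' + 1) - (J + 1) ≤ J' - J := by omega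
      exact_mod_cast Nat.cast_le.mpr (le_trans hc this)
    have h3 : Kn n x I J' - Kn n x I J ≤
        ∑ k : ZMod n, if J < (x k).val ∧ (x k).val ≤ J' then (1:ℤ) else 0 := by
      rw [Kn, Kn, ← Finset.sum_sub_distrib]
      apply Finset.sum_le_sum; intro k _
      split_ifs <;> omega
    omega

lemma Kn_supermod (x : Equiv.Perm (ZMod n)) {I1 I2 J1 J2 : ℕ} (hI : I1 ≤ I2) (hJ : J1 ≤ J2) :
    Kn n x I1 J2 + Kn n x I2 J1 ≤ Kn n x I2 J2 + Kn n x I1 J1 := by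
  rw [Kn, Kn, Kn, Kn, ← Finset.sum_add_distrib, ← Finset.sum_add_distrib]
  apply Finset.sum_le_sum; intro k _
  split_ifs <;> omega

end GD

namespace GD
variable (n : ℕ) [NeZero n]

lemma ind_diff (i k : ZMod n) :
    ((if k.val ≤ i.val then (1:ℤ) else 0) - (if k.val ≤ (i-1).val then 1 else 0))
      = (if k = i then 1 else 0) - (if i = 0 then 1 else 0) := by
  have hk := ZMod.val_lt k
  have hi := ZMod.val_lt i
  have hval : (k = i) ↔ k.val = i.val :=
    ⟨fun h => by rw [h], fun h => ZMod.val_injective n h⟩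
  have hzero : (i = 0) ↔ i.val = 0 := (ZMod.val_eq_zero i).symm
  rw [sub_one_val]
  simp only [hval, hzero]
  split_ifs <;> omega

lemma ite_and_mul (A B : Prop) [Decidable A] [Decidable B] :
    (if A ∧ B then (1:ℤ) else 0) = (if A then (1:ℤ) else 0) * (if B then 1 else 0) := by
  split_ifs <;> simp_all

lemma delta_KK (x : Equiv.Perm (ZMod n)) (i j : ZMod n) :
    KK n x i j - KK n x (i-1) j - KK n x i (j-1) + KK n x (i-1) (j-1)
      = (if x i = j then 1 else 0) - (if i = 0 then 1 else 0) - (if j = 0 then 1 else 0)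
        + (n : ℤ) * ((if i = 0 then (1:ℤ) else 0) * (if j = 0 then 1 else 0)) := by
  have key : ∀ k : ZMod n,
      (if k.val ≤ i.val ∧ (x k).val ≤ j.val then (1:ℤ) else 0)
        - (if k.val ≤ (i-1).val ∧ (x k).val ≤ j.val then 1 else 0)
        - (if k.val ≤ i.val ∧ (x k).val ≤ (j-1).val then 1 else 0)
        + (if k.val ≤ (i-1).val ∧ (x k).val ≤ (j-1).val then 1 else 0)
      = ((if k = i then (1:ℤ) else 0) - (if i = 0 then 1 else 0))
          * ((if x k = j then (1:ℤ) else 0) - (if j = 0 then 1 else 0)) := by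
    intro k
    have h1 := ind_diff n i k
    have h2 := ind_diff n j (x k)
    rw [ite_and_mul, ite_and_mul, ite_and_mul, ite_and_mul, ← h1, ← h2]
    ring
  have lhs : KK n x i j - KK n x (i-1) j - KK n x i (j-1) + KK n x (i-1) (j-1)
      = ∑ k : ZMod n,
        ((if k = i then (1:ℤ) else 0) - (if i = 0 then 1 else 0))
          * ((if x k = j then (1:ℤ) else 0) - (if j = 0 then 1 else 0)) := by
    simp only [KK, Kn]
    rw [← Finset.sum_sub_distrib, ← Finset.sum_sub_distrib, ← Finset.sum_add_distrib]
    exact Finset.sum_congr rfl (fun k _ => key k)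
  have hSU : ∑ k : ZMod n, (if k = i then (1:ℤ) else 0) = 1 := by simp
  have hSV : ∑ k : ZMod n, (if x k = j then (1:ℤ) else 0) = 1 := by
    rw [Equiv.sum_comp x (fun l => if l = j then (1:ℤ) else 0)]; simp
  have hS1 : ∑ k : ZMod n, (if k = i then (1:ℤ) else 0) * (if x k = j then 1 else 0)
      = (if x i = j then (1:ℤ) else 0) := by
    simp only [ite_mul, one_mul, zero_mul]
    simp
  have hcard : ∑ _k : ZMod n, (1:ℤ) = n := by simp [ZMod.card]
  rw [lhs]
  have expand : ∀ k : ZMod n,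
      ((if k = i then (1:ℤ) else 0) - (if i = 0 then 1 else 0))
        * ((if x k = j then (1:ℤ) else 0) - (if j = 0 then 1 else 0))
      = (if k = i then (1:ℤ) else 0) * (if x k = j then 1 else 0)
        - (if j = 0 then (1:ℤ) else 0) * (if k = i then 1 else 0)
        - (if i = 0 then (1:ℤ) else 0) * (if x k = j then 1 else 0)
        + (if i = 0 then (1:ℤ) else 0) * (if j = 0 then 1 else 0) * 1 := by
    intro k; ring
  rw [Finset.sum_congr rfl (fun k _ => expand k)]
  rw [Finset.sum_add_distrib, Finset.sum_sub_distrib, Finset.sum_sub_distrib,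
    ← Finset.mul_sum, ← Finset.mul_sum, ← Finset.mul_sum, hS1, hSU, hSV, hcard]
  ring

end GD

namespace GD
variable (n : ℕ) [NeZero n]

lemma KK_row (x : Equiv.Perm (ZMod n)) (j : ZMod n) :
    KK n x ((n : ZMod n) - 1) j = (j.val : ℤ) + 1 := by
  have hj := ZMod.val_lt j
  rw [KK, val_c, Kn_boundary_left]
  have : min n (j.val + 1) = j.val + 1 := by omega
  rw [this]; push_cast; ring

lemma KK_col (x : Equiv.Perm (ZMod n)) (i : ZMod n) :
    KK n x i ((n : ZMod n) - 1) = (i.val : ℤ) + 1 := by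
  have hi := ZMod.val_lt i
  rw [KK, val_c, Kn_boundary_right]
  have : min n (i.val + 1) = i.val + 1 := by omega
  rw [this]; push_cast; ring

lemma domain_unique {x y : Equiv.Perm (ZMod n)} {D E : ZMod n → ZMod n → ℤ}
    (hD : IsGridDomain n x y D) (hE : IsGridDomain n x y E)
    (hrow : ∀ j, D ((n : ZMod n) - 1) j = E ((n : ZMod n) - 1) j)
    (hcol : ∀ i, D i ((n : ZMod n) - 1) = E i ((n : ZMod n) - 1)) : D = E := by
  set c : ZMod n := (n : ZMod n) - 1 with hc
  set F : ZMod n → ZMod n → ℤ := fun i j => D i j - E i j with hF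
  have hΔ : ∀ i j, F i j - F (i-1) j - F i (j-1) + F (i-1) (j-1) = 0 := by
    intro i j
    have h1 := hD.2 i j
    have h2 := hE.2 i j
    simp only [hF]; linarith
  have hd : ∀ i j, F i j - F (i-1) j = 0 := by
    intro i j
    have step : ∀ j', (fun j' => F i j' - F (i-1) j') j' = (fun j' => F i j' - F (i-1) j') (j' - 1) := by
      intro j'; have := hΔ i j'; simp only; linarith
    have := cycle_const n (fun j' => F i j' - F (i-1) j') step j c
    rw [this]
    have h1 := hcol i
    have h2 := hcol (i - 1)
    simp only [hF]; linarith
  have : ∀ j i, F i j = 0 := by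
    intro j i
    have step : ∀ i', (fun i' => F i' j) i' = (fun i' => F i' j) (i' - 1) := by
      intro i'; have := hd i' j; simp only; linarith
    have := cycle_const n (fun i' => F i' j) step i c
    rw [this]
    have := hrow j
    simp only [hF]; linarith
  funext i j
  have := this j i
  simp only [hF] at this; linarith

lemma isGridDomain_cand (x y : Equiv.Perm (ZMod n)) (α β : ZMod n → ℤ)
    (hα : α ((n : ZMod n) - 1) = 0) (hβ : β ((n : ZMod n) - 1) = 0) :
    IsGridDomain n x y (fun i j => KK n x i j - KK n y i j + (β i + α j)) := by
  constructor
  · simp only [KK_row, hα, hβ]; ring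
  · intro i j
    have d1 := delta_KK n x i j
    have d2 := delta_KK n y i j
    simp only
    linarith

/-- the boundary-data function determined by `a` and `b`. -/
def abf (a : {j : ZMod n // j ≠ (n : ZMod n) - 1} → ℕ)
    (b : {i : ZMod n // i ≠ (n : ZMod n) - 1} → ℕ) (i j : ZMod n) : ℤ :=
  (if h : i = (n : ZMod n) - 1 then 0 else (b ⟨i, h⟩ : ℤ))
    + (if h : j = (n : ZMod n) - 1 then 0 else (a ⟨j, h⟩ : ℤ))

variable {a : {j : ZMod n // j ≠ (n : ZMod n) - 1} → ℕ}
variable {b : {i : ZMod n // i ≠ (n : ZMod n) - 1} → ℕ}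

lemma abf_nonneg (i j : ZMod n) : 0 ≤ abf n a b i j := by
  unfold abf; split_ifs <;> positivity

lemma abf_corner : abf n a b ((n : ZMod n) - 1) ((n : ZMod n) - 1) = 0 := by
  unfold abf; rw [dif_pos rfl, dif_pos rfl]; ring

lemma abf_row {j : ZMod n} (hj : j ≠ (n : ZMod n) - 1) :
    abf n a b ((n : ZMod n) - 1) j = (a ⟨j, hj⟩ : ℤ) := by
  unfold abf; rw [dif_pos rfl, dif_neg hj]; ring

lemma abf_col {i : ZMod n} (hi : i ≠ (n : ZMod n) - 1) :
    abf n a b i ((n : ZMod n) - 1) = (b ⟨i, hi⟩ : ℤ) := by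
  unfold abf; rw [dif_pos rfl, dif_neg hi]; ring

lemma isGridDomain_abf_cand (x y : Equiv.Perm (ZMod n)) :
    IsGridDomain n x y (fun i j => KK n x i j - KK n y i j + abf n a b i j) :=
  isGridDomain_cand n x y (fun j => if h : j = (n : ZMod n) - 1 then 0 else (a ⟨j, h⟩ : ℤ))
    (fun i => if h : i = (n : ZMod n) - 1 then 0 else (b ⟨i, h⟩ : ℤ))
    (dif_pos rfl) (dif_pos rfl)

lemma mem_Gset_iff (y x : Equiv.Perm (ZMod n)) :
    x ∈ Gset n a b y ↔ ∀ i j : ZMod n, 0 ≤ KK n x i j - KK n y i j + abf n a b i j := by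
  have hCdom : IsGridDomain n x y (fun i j => KK n x i j - KK n y i j + abf n a b i j) :=
    isGridDomain_abf_cand n x y
  constructor
  · rintro ⟨D, ⟨hDdom, hDpos⟩, hA, hB⟩
    have hDC : D = fun i j => KK n x i j - KK n y i j + abf n a b i j := by
      apply domain_unique n hDdom hCdom
      · intro j
        by_cases hj : j = (n : ZMod n) - 1
        · subst hj
          rw [hDdom.1]
          simp only [KK_row, abf_corner]
          ring
        · have h1 := hA ⟨j, hj⟩
          rw [colA] at h1
          rw [h1]
          simp only [KK_row, abf_row n hj]
          ring
      · intro i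
        by_cases hi : i = (n : ZMod n) - 1
        · subst hi
          rw [hDdom.1]
          simp only [KK_col, abf_corner]
          ring
        · have h1 := hB ⟨i, hi⟩
          rw [rowB] at h1
          rw [h1]
          simp only [KK_col, abf_col n hi]
          ring
    intro i j
    have h2 := hDpos i j
    rw [hDC] at h2
    exact h2
  · intro hpos
    refine ⟨_, ⟨hCdom, hpos⟩, ?_, ?_⟩
    · rintro ⟨j, hj⟩
      rw [colA]
      simp only [KK_row, abf_row n hj]
      ring
    · rintro ⟨i, hi⟩
      rw [rowB]
      simp only [KK_col, abf_col n hi]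
      ring

lemma gridLE_iff (m x : Equiv.Perm (ZMod n)) :
    gridLE n m x ↔ ∀ i j : ZMod n, KK n m i j ≤ KK n x i j := by
  have hCdom : IsGridDomain n x m (fun i j => KK n x i j - KK n m i j + ((0:ℤ) + (0:ℤ))) :=
    isGridDomain_cand n x m (fun _ => 0) (fun _ => 0) rfl rfl
  constructor
  · rintro ⟨D, ⟨hDdom, hDpos⟩, hA, hB⟩
    have hDC : D = fun i j => KK n x i j - KK n m i j + ((0:ℤ) + (0:ℤ)) := by
      apply domain_unique n hDdom hCdom
      · intro j
        by_cases hj : j = (n : ZMod n) - 1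
        · subst hj; rw [hDdom.1]; simp only [KK_row]; ring
        · have h1 := congrFun hA ⟨j, hj⟩
          rw [colA] at h1
          rw [h1]; simp only [KK_row, Pi.zero_apply]; ring
      · intro i
        by_cases hi : i = (n : ZMod n) - 1
        · subst hi; rw [hDdom.1]; simp only [KK_col]; ring
        · have h1 := congrFun hB ⟨i, hi⟩
          rw [rowB] at h1
          rw [h1]; simp only [KK_col, Pi.zero_apply]; ring
    intro i j
    have h2 := hDpos i j
    rw [hDC] at h2
    simp only at h2
    linarith
  · intro hle
    refine ⟨_, ⟨hCdom, fun i j => by show (0:ℤ) ≤ KK n x i j - KK n m i j + ((0:ℤ) + (0:ℤ)); linarith [hle i j]⟩, ?_, ?_⟩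
    · funext j
      rw [colA]
      simp only [KK_row, Pi.zero_apply]; ring
    · funext i
      rw [rowB]
      simp only [KK_col, Pi.zero_apply]; ring

lemma KK_inj {x x' : Equiv.Perm (ZMod n)} (h : ∀ i j, KK n x i j = KK n x' i j) : x = x' := by
  apply Equiv.ext
  intro i
  have d1 := delta_KK n x i (x i)
  have d2 := delta_KK n x' i (x i)
  rw [h i (x i), h (i-1) (x i), h i (x i - 1), h (i-1) (x i - 1)] at d1
  rw [d2] at d1
  rw [if_pos rfl] at d1
  by_contra hne
  rw [if_neg (fun hc => hne hc.symm)] at d1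
  linarith

lemma Kn_le_one (x : Equiv.Perm (ZMod n)) (I J : ℕ) : Kn n x I J ≤ Kn n 1 I J := by
  have h1 := Kn_le_left n x I J
  have h2 := Kn_le_right n x I J
  have h3 := Kn_le_card n x I J
  have : Kn n 1 I J = (min n (min I J + 1) : ℕ) := by
    have : Kn n 1 I J = ∑ k : ZMod n, if k.val ≤ min I J then (1:ℤ) else 0 := by
      apply Finset.sum_congr rfl; intro k _
      simp only [Equiv.Perm.one_apply]
      congr 1
      simp only [eq_iff_iff, le_min_iff]
    rw [this, sum_val n (fun K => if K ≤ min I J then (1:ℤ) else 0), count_le]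
  rw [this]
  rcases le_total I J with hIJ | hIJ <;> · push_cast; omega

end GD

namespace GD
variable (n : ℕ) [NeZero n]
variable (y : Equiv.Perm (ZMod n))
variable (a : {j : ZMod n // j ≠ (n : ZMod n) - 1} → ℕ)
variable (b : {i : ZMod n // i ≠ (n : ZMod n) - 1} → ℕ)

/-- the lower-bound function `K y - a - b` on `ℕ` indices. -/
def LB (I J : ℕ) : ℤ := Kn n y I J - abf n a b ((I : ℕ) : ZMod n) ((J : ℕ) : ZMod n)

lemma LB_KK (i j : ZMod n) : LB n y a b i.val j.val = KK n y i j - abf n a b i j := by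
  rw [LB, KK, ZMod.natCast_rightInverse i, ZMod.natCast_rightInverse j]

lemma LB_le_Kn (I J : ℕ) : LB n y a b I J ≤ Kn n y I J := by
  have := abf_nonneg n (a := a) (b := b) ((I : ℕ) : ZMod n) ((J : ℕ) : ZMod n)
  rw [LB]; linarith

lemma LB_le_left (I J : ℕ) : LB n y a b I J ≤ (I : ℤ) + 1 :=
  le_trans (LB_le_Kn n y a b I J) (Kn_le_left n y I J)

lemma LB_le_right (I J : ℕ) : LB n y a b I J ≤ (J : ℤ) + 1 :=
  le_trans (LB_le_Kn n y a b I J) (Kn_le_right n y I J)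

lemma LB_corner : LB n y a b (n-1) (n-1) = (n : ℤ) := by
  rw [LB, cast_pred]
  rw [abf_corner]
  rw [Kn_boundary_left]
  have h := NeZero.pos n
  have : min n ((n-1) + 1) = n := by omega
  rw [this]; ring

lemma LB_supermod {I1 I2 J1 J2 : ℕ} (hI : I1 ≤ I2) (hJ : J1 ≤ J2) :
    LB n y a b I1 J2 + LB n y a b I2 J1 ≤ LB n y a b I2 J2 + LB n y a b I1 J1 := by
  have h := Kn_supermod n y hI hJ
  simp only [LB, abf]
  linarith

/-- terms over which the envelope is a supremum. -/
def TT (X Y : ℕ) : Option (ZMod n × ZMod n) → ℤ :=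
  fun o => o.elim 0 (fun p =>
    LB n y a b p.1.val p.2.val - ((p.1.val - X : ℕ) : ℤ) - ((p.2.val - Y : ℕ) : ℤ))

/-- the minimal envelope dominated by every rank matrix that dominates `LB`. -/
def MM (X Y : ℕ) : ℤ :=
  Finset.univ.sup' ⟨none, Finset.mem_univ none⟩ (TT n y a b X Y)

lemma MM_ge (X Y : ℕ) (o : Option (ZMod n × ZMod n)) : TT n y a b X Y o ≤ MM n y a b X Y :=
  Finset.le_sup' _ (Finset.mem_univ o)

lemma MM_le {X Y : ℕ} {z : ℤ} (h : ∀ o, TT n y a b X Y o ≤ z) : MM n y a b X Y ≤ z :=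
  Finset.sup'_le _ _ (fun o _ => h o)

lemma MM_exists (X Y : ℕ) : ∃ o, MM n y a b X Y = TT n y a b X Y o := by
  obtain ⟨o, -, ho⟩ := Finset.exists_mem_eq_sup' ⟨none, Finset.mem_univ none⟩ (TT n y a b X Y)
  exact ⟨o, ho⟩

lemma MM_nonneg (X Y : ℕ) : 0 ≤ MM n y a b X Y := MM_ge n y a b X Y none

lemma MM_le_left (X Y : ℕ) : MM n y a b X Y ≤ (X : ℤ) + 1 := by
  apply MM_le
  rintro (_ | p)
  · simp only [TT, Option.elim]; positivity
  · have := LB_le_left n y a b p.1.val p.2.val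
    simp only [TT, Option.elim]
    omega

lemma MM_le_right (X Y : ℕ) : MM n y a b X Y ≤ (Y : ℤ) + 1 := by
  apply MM_le
  rintro (_ | p)
  · simp only [TT, Option.elim]; positivity
  · have := LB_le_right n y a b p.1.val p.2.val
    simp only [TT, Option.elim]
    omega

lemma MM_mono_left {X X' : ℕ} (h : X ≤ X') (Y : ℕ) : MM n y a b X Y ≤ MM n y a b X' Y := by
  apply MM_le
  rintro (_ | p)
  · exact MM_ge n y a b X' Y none
  · refine le_trans ?_ (MM_ge n y a b X' Y (some p))
    simp only [TT, Option.elim]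
    omega

lemma MM_mono_right (X : ℕ) {Y Y' : ℕ} (h : Y ≤ Y') : MM n y a b X Y ≤ MM n y a b X Y' := by
  apply MM_le
  rintro (_ | p)
  · exact MM_ge n y a b X Y' none
  · refine le_trans ?_ (MM_ge n y a b X Y' (some p))
    simp only [TT, Option.elim]
    omega

lemma MM_step_left (X Y : ℕ) : MM n y a b (X+1) Y ≤ MM n y a b X Y + 1 := by
  apply MM_le
  rintro (_ | p)
  · have := MM_nonneg n y a b X Y; simp only [TT, Option.elim]; omega
  · have := MM_ge n y a b X Y (some p)
    simp only [TT, Option.elim] at this ⊢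
    omega

lemma MM_step_right (X Y : ℕ) : MM n y a b X (Y+1) ≤ MM n y a b X Y + 1 := by
  apply MM_le
  rintro (_ | p)
  · have := MM_nonneg n y a b X Y; simp only [TT, Option.elim]; omega
  · have := MM_ge n y a b X Y (some p)
    simp only [TT, Option.elim] at this ⊢
    omega

lemma MM_row {J : ℕ} (hJ : J ≤ n - 1) : MM n y a b (n-1) J = (J : ℤ) + 1 := by
  refine le_antisymm (MM_le_right n y a b (n-1) J) ?_
  have hlt : n - 1 < n := by have := NeZero.pos n; omega
  have := MM_ge n y a b (n-1) J (some (((n-1 : ℕ) : ZMod n), ((n-1 : ℕ) : ZMod n)))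
  simp only [TT, Option.elim, ZMod.val_cast_of_lt hlt] at this
  rw [LB_corner] at this
  have hc1 : ((n - 1 - (n-1) : ℕ) : ℤ) = 0 := by norm_num
  have hc2 : ((n - 1 - J : ℕ) : ℤ) = (n : ℤ) - 1 - J := by
    have := NeZero.pos n; push_cast [Nat.cast_sub]; omega
  omega

lemma MM_col {I : ℕ} (hI : I ≤ n - 1) : MM n y a b I (n-1) = (I : ℤ) + 1 := by
  refine le_antisymm (MM_le_left n y a b I (n-1)) ?_
  have hlt : n - 1 < n := by have := NeZero.pos n; omega
  have := MM_ge n y a b I (n-1) (some (((n-1 : ℕ) : ZMod n), ((n-1 : ℕ) : ZMod n)))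
  simp only [TT, Option.elim, ZMod.val_cast_of_lt hlt] at this
  rw [LB_corner] at this
  have hc1 : ((n - 1 - (n-1) : ℕ) : ℤ) = 0 := by norm_num
  have hc2 : ((n - 1 - I : ℕ) : ℤ) = (n : ℤ) - 1 - I := by
    have := NeZero.pos n; push_cast [Nat.cast_sub]; omega
  omega

lemma MM_ge_LB {I J : ℕ} (hI : I < n) (hJ : J < n) : LB n y a b I J ≤ MM n y a b I J := by
  have := MM_ge n y a b I J (some (((I : ℕ) : ZMod n), ((J : ℕ) : ZMod n)))
  simp only [TT, Option.elim, ZMod.val_cast_of_lt hI, ZMod.val_cast_of_lt hJ] at this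
  omega

lemma MM_supermod {I J : ℕ} (hI : 1 ≤ I) (hJ : 1 ≤ J) :
    MM n y a b (I-1) J + MM n y a b I (J-1)
      ≤ MM n y a b I J + MM n y a b (I-1) (J-1) := by
  obtain ⟨s, hs⟩ := MM_exists n y a b (I-1) J
  obtain ⟨t, ht⟩ := MM_exists n y a b I (J-1)
  rcases s with _ | s
  · have h0 : MM n y a b (I-1) J = 0 := hs
    have h1 : MM n y a b I (J-1) ≤ MM n y a b I J := MM_mono_right n y a b I (by omega)
    have h2 := MM_nonneg n y a b (I-1) (J-1)
    linarith
  rcases t with _ | t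
  · have h0 : MM n y a b I (J-1) = 0 := ht
    have h1 : MM n y a b (I-1) J ≤ MM n y a b I J := MM_mono_left n y a b (by omega) J
    have h2 := MM_nonneg n y a b (I-1) (J-1)
    linarith
  rw [hs, ht]
  simp only [TT, Option.elim]
  by_cases hc1 : s.2.val < J
  · have h1 : LB n y a b s.1.val s.2.val - ((s.1.val - (I-1) : ℕ) : ℤ) - ((s.2.val - J : ℕ) : ℤ)
        ≤ MM n y a b (I-1) (J-1) := by
      have := MM_ge n y a b (I-1) (J-1) (some s)
      simp only [TT, Option.elim] at this
      omega
    have h2 : LB n y a b t.1.val t.2.val - ((t.1.val - I : ℕ) : ℤ) - ((t.2.val - (J-1) : ℕ) : ℤ)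
        ≤ MM n y a b I J := by
      have := MM_ge n y a b I J (some t)
      simp only [TT, Option.elim] at this
      omega
    omega
  by_cases hc2 : J ≤ t.2.val
  · have h1 : LB n y a b s.1.val s.2.val - ((s.1.val - (I-1) : ℕ) : ℤ) - ((s.2.val - J : ℕ) : ℤ)
        ≤ MM n y a b (I-1) (J-1) + 1 := by
      have := MM_ge n y a b (I-1) (J-1) (some s)
      simp only [TT, Option.elim] at this
      omega
    have h2 : LB n y a b t.1.val t.2.val - ((t.1.val - I : ℕ) : ℤ) - ((t.2.val - (J-1) : ℕ) : ℤ)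
        ≤ MM n y a b I J - 1 := by
      have := MM_ge n y a b I J (some t)
      simp only [TT, Option.elim] at this
      omega
    omega
  by_cases hc3 : I ≤ s.1.val
  · have h1 : LB n y a b s.1.val s.2.val - ((s.1.val - (I-1) : ℕ) : ℤ) - ((s.2.val - J : ℕ) : ℤ)
        ≤ MM n y a b I J - 1 := by
      have := MM_ge n y a b I J (some s)
      simp only [TT, Option.elim] at this
      omega
    have h2 : LB n y a b t.1.val t.2.val - ((t.1.val - I : ℕ) : ℤ) - ((t.2.val - (J-1) : ℕ) : ℤ)
        ≤ MM n y a b (I-1) (J-1) + 1 := by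
      have := MM_ge n y a b (I-1) (J-1) (some t)
      simp only [TT, Option.elim] at this
      omega
    omega
  by_cases hc4 : t.1.val < I
  · have h1 : LB n y a b s.1.val s.2.val - ((s.1.val - (I-1) : ℕ) : ℤ) - ((s.2.val - J : ℕ) : ℤ)
        ≤ MM n y a b I J := by
      have := MM_ge n y a b I J (some s)
      simp only [TT, Option.elim] at this
      omega
    have h2 : LB n y a b t.1.val t.2.val - ((t.1.val - I : ℕ) : ℤ) - ((t.2.val - (J-1) : ℕ) : ℤ)
        ≤ MM n y a b (I-1) (J-1) := by
      have := MM_ge n y a b (I-1) (J-1) (some t)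
      simp only [TT, Option.elim] at this
      omega
    omega
  push_neg at hc1 hc2 hc3 hc4
  have hsm := LB_supermod n y a b (show s.1.val ≤ t.1.val by omega)
    (show t.2.val ≤ s.2.val by omega)
  have hu : LB n y a b t.1.val s.2.val - ((t.1.val - I : ℕ) : ℤ) - ((s.2.val - J : ℕ) : ℤ)
      ≤ MM n y a b I J := by
    have := MM_ge n y a b I J (some (t.1, s.2))
    simp only [TT, Option.elim] at this
    exact this
  have hv : LB n y a b s.1.val t.2.val - ((s.1.val - (I-1) : ℕ) : ℤ) - ((t.2.val - (J-1) : ℕ) : ℤ)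
      ≤ MM n y a b (I-1) (J-1) := by
    have := MM_ge n y a b (I-1) (J-1) (some (s.1, t.2))
    simp only [TT, Option.elim] at this
    exact this
  omega

end GD

namespace GD
variable (n : ℕ) [NeZero n]
variable (y : Equiv.Perm (ZMod n))
variable (a : {j : ZMod n // j ≠ (n : ZMod n) - 1} → ℕ)
variable (b : {i : ZMod n // i ≠ (n : ZMod n) - 1} → ℕ)

def EE (X Y : ℕ) : ℤ := if X = 0 ∨ Y = 0 then 0 else MM n y a b (X-1) (Y-1)

def PP (I J : ℕ) : ℤ :=
  EE n y a b (I+1) (J+1) - EE n y a b I (J+1) - EE n y a b (I+1) J + EE n y a b I J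

lemma EE_pos {X Y : ℕ} (hX : 1 ≤ X) (hY : 1 ≤ Y) :
    EE n y a b X Y = MM n y a b (X-1) (Y-1) := by rw [EE, if_neg (by omega)]

lemma EE_zero {X Y : ℕ} (h : X = 0 ∨ Y = 0) : EE n y a b X Y = 0 := by rw [EE, if_pos h]

lemma PP_nonneg (I J : ℕ) : 0 ≤ PP n y a b I J := by
  rcases Nat.eq_zero_or_pos I with hI | hI <;> rcases Nat.eq_zero_or_pos J with hJ | hJ
  · subst hI; subst hJ
    rw [PP, EE_pos n y a b le_rfl le_rfl, EE_zero n y a b (Or.inl rfl),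
      EE_zero n y a b (Or.inr rfl), EE_zero n y a b (Or.inl rfl)]
    simpa using MM_nonneg n y a b 0 0
  · subst hI
    rw [PP, EE_pos n y a b le_rfl (by omega), EE_pos n y a b le_rfl (by omega),
      EE_zero n y a b (Or.inl rfl), EE_zero n y a b (Or.inl rfl)]
    simp only [Nat.add_sub_cancel, Nat.sub_self]
    have := MM_mono_right n y a b 0 (show J - 1 ≤ J by omega)
    omega
  · subst hJ
    rw [PP, EE_pos n y a b (by omega) le_rfl, EE_pos n y a b (by omega) le_rfl,
      EE_zero n y a b (Or.inr rfl), EE_zero n y a b (Or.inr rfl)]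
    simp only [Nat.add_sub_cancel, Nat.sub_self]
    have := MM_mono_left n y a b (show I - 1 ≤ I by omega) 0
    omega
  · rw [PP, EE_pos n y a b (by omega) (by omega), EE_pos n y a b (by omega) (by omega),
      EE_pos n y a b (by omega) (by omega), EE_pos n y a b (by omega) (by omega)]
    simp only [Nat.add_sub_cancel, Nat.sub_self]
    have := MM_supermod n y a b hI hJ
    omega

lemma PP_le_one (I J : ℕ) : PP n y a b I J ≤ 1 := by
  rcases Nat.eq_zero_or_pos I with hI | hI <;> rcases Nat.eq_zero_or_pos J with hJ | hJ
  · subst hI; subst hJ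
    rw [PP, EE_pos n y a b le_rfl le_rfl, EE_zero n y a b (Or.inl rfl),
      EE_zero n y a b (Or.inr rfl), EE_zero n y a b (Or.inl rfl)]
    simpa using MM_le_left n y a b 0 0
  · subst hI
    rw [PP, EE_pos n y a b le_rfl (by omega), EE_pos n y a b le_rfl (by omega),
      EE_zero n y a b (Or.inl rfl), EE_zero n y a b (Or.inl rfl)]
    simp only [Nat.add_sub_cancel, Nat.sub_self]
    have h1 := MM_step_right n y a b 0 (J-1)
    have h2 : J - 1 + 1 = J := by omega
    rw [h2] at h1
    omega
  · subst hJ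
    rw [PP, EE_pos n y a b (by omega) le_rfl, EE_pos n y a b (by omega) le_rfl,
      EE_zero n y a b (Or.inr rfl), EE_zero n y a b (Or.inr rfl)]
    simp only [Nat.add_sub_cancel, Nat.sub_self]
    have h1 := MM_step_left n y a b (I-1) 0
    have h2 : I - 1 + 1 = I := by omega
    rw [h2] at h1
    omega
  · rw [PP, EE_pos n y a b (by omega) (by omega), EE_pos n y a b (by omega) (by omega),
      EE_pos n y a b (by omega) (by omega), EE_pos n y a b (by omega) (by omega)]
    simp only [Nat.add_sub_cancel, Nat.sub_self]
    have h1 := MM_step_right n y a b I (J-1)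
    have h2 : J - 1 + 1 = J := by omega
    rw [h2] at h1
    have h3 := MM_mono_right n y a b (I-1) (show J - 1 ≤ J by omega)
    omega

lemma PP_row_sum {I : ℕ} (hI : I < n) : ∑ J ∈ Finset.range n, PP n y a b I J = 1 := by
  have key : ∀ J, PP n y a b I J
      = (EE n y a b (I+1) (J+1) - EE n y a b I (J+1)) - (EE n y a b (I+1) J - EE n y a b I J) := by
    intro J; simp only [PP]; ring
  have htel := Finset.sum_range_sub (fun X => EE n y a b (I+1) X - EE n y a b I X) n
  rw [Finset.sum_congr rfl (fun J _ => key J), htel]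
  have h0 : EE n y a b (I+1) 0 = 0 := EE_zero n y a b (Or.inr rfl)
  have h0' : EE n y a b I 0 = 0 := EE_zero n y a b (Or.inr rfl)
  have hn1 : EE n y a b (I+1) n = MM n y a b I (n-1) := by
    rw [EE_pos n y a b (by omega) (by omega), Nat.add_sub_cancel]
  have hcol := MM_col n y a b (show I ≤ n - 1 by omega)
  rcases Nat.eq_zero_or_pos I with h | h
  · subst h
    rw [h0, h0', hn1, EE_zero n y a b (Or.inl rfl), hcol]
    try push_cast
    try ring
  · rw [h0, h0', hn1, EE_pos n y a b (by omega) (by omega), hcol,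
      MM_col n y a b (show I - 1 ≤ n - 1 by omega)]
    have : ((I - 1 : ℕ) : ℤ) = (I : ℤ) - 1 := by omega
    rw [this]; ring

lemma PP_col_sum {J : ℕ} (hJ : J < n) : ∑ I ∈ Finset.range n, PP n y a b I J = 1 := by
  have key : ∀ I, PP n y a b I J
      = (EE n y a b (I+1) (J+1) - EE n y a b (I+1) J) - (EE n y a b I (J+1) - EE n y a b I J) := by
    intro I; simp only [PP]; ring
  have htel := Finset.sum_range_sub (fun X => EE n y a b X (J+1) - EE n y a b X J) n
  rw [Finset.sum_congr rfl (fun I _ => key I), htel]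
  have h0 : EE n y a b 0 (J+1) = 0 := EE_zero n y a b (Or.inl rfl)
  have h0' : EE n y a b 0 J = 0 := EE_zero n y a b (Or.inl rfl)
  have hn1 : EE n y a b n (J+1) = MM n y a b (n-1) J := by
    rw [EE_pos n y a b (by omega) (by omega), Nat.add_sub_cancel]
    try congr 1
    try omega
  have hrow := MM_row n y a b (show J ≤ n - 1 by omega)
  rcases Nat.eq_zero_or_pos J with h | h
  · subst h
    rw [h0, h0', hn1, EE_zero n y a b (Or.inr rfl), hrow]
    try push_cast
    try ring
  · rw [h0, h0', hn1, EE_pos n y a b (by omega) (by omega), hrow,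
      MM_row n y a b (show J - 1 ≤ n - 1 by omega)]
    have : ((J - 1 : ℕ) : ℤ) = (J : ℤ) - 1 := by omega
    rw [this]; ring

lemma PP_row_exists_unique {I : ℕ} (hI : I < n) :
    ∃! J, J < n ∧ PP n y a b I J = 1 := by
  have hex : ∃ J, J < n ∧ PP n y a b I J = 1 := by
    by_contra h
    push_neg at h
    have : ∑ J ∈ Finset.range n, PP n y a b I J = 0 := by
      apply Finset.sum_eq_zero
      intro J hJ
      have h1 := PP_nonneg n y a b I J
      have h2 := PP_le_one n y a b I J
      have h3 := h J (Finset.mem_range.mp hJ)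
      omega
    rw [PP_row_sum n y a b hI] at this
    exact one_ne_zero this
  obtain ⟨J, hJ⟩ := hex
  refine ⟨J, hJ, ?_⟩
  intro J' hJ'
  by_contra hne
  have hsub : ({J', J} : Finset ℕ) ⊆ Finset.range n := by
    intro t ht
    simp only [Finset.mem_insert, Finset.mem_singleton] at ht
    rcases ht with rfl | rfl
    · exact Finset.mem_range.mpr hJ'.1
    · exact Finset.mem_range.mpr hJ.1
  have hle := Finset.sum_le_sum_of_subset_of_nonneg hsub
    (fun t _ _ => PP_nonneg n y a b I t)
  rw [Finset.sum_pair hne, PP_row_sum n y a b hI, hJ'.2, hJ.2] at hle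
  omega

lemma PP_col_exists_unique {J : ℕ} (hJ : J < n) :
    ∃! I, I < n ∧ PP n y a b I J = 1 := by
  have hex : ∃ I, I < n ∧ PP n y a b I J = 1 := by
    by_contra h
    push_neg at h
    have : ∑ I ∈ Finset.range n, PP n y a b I J = 0 := by
      apply Finset.sum_eq_zero
      intro I hI
      have h1 := PP_nonneg n y a b I J
      have h2 := PP_le_one n y a b I J
      have h3 := h I (Finset.mem_range.mp hI)
      omega
    rw [PP_col_sum n y a b hJ] at this
    exact one_ne_zero this
  obtain ⟨I, hI⟩ := hex
  refine ⟨I, hI, ?_⟩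
  intro I' hI'
  by_contra hne
  have hsub : ({I', I} : Finset ℕ) ⊆ Finset.range n := by
    intro t ht
    simp only [Finset.mem_insert, Finset.mem_singleton] at ht
    rcases ht with rfl | rfl
    · exact Finset.mem_range.mpr hI'.1
    · exact Finset.mem_range.mpr hI.1
  have hle := Finset.sum_le_sum_of_subset_of_nonneg hsub
    (fun t _ _ => PP_nonneg n y a b t J)
  rw [Finset.sum_pair hne, PP_col_sum n y a b hJ, hI'.2, hI.2] at hle
  omega

noncomputable def mfun : ZMod n → ZMod n := fun i =>
  (((PP_row_exists_unique n y a b (ZMod.val_lt i)).exists.choose : ℕ) : ZMod n)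

lemma mfun_spec (i : ZMod n) :
    (mfun n y a b i).val < n ∧ PP n y a b i.val (mfun n y a b i).val = 1 := by
  have h := (PP_row_exists_unique n y a b (ZMod.val_lt i)).exists.choose_spec
  rw [mfun, ZMod.val_cast_of_lt h.1]
  exact h

lemma mfun_inj : Function.Injective (mfun n y a b) := by
  intro i1 i2 h
  have h1 := mfun_spec n y a b i1
  have h2 := mfun_spec n y a b i2
  rw [h] at h1
  have huniq := PP_col_exists_unique n y a b h2.1
  have e1 := huniq.unique ⟨ZMod.val_lt i1, h1.2⟩ ⟨ZMod.val_lt i2, h2.2⟩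
  exact ZMod.val_injective n e1

noncomputable def mPerm : Equiv.Perm (ZMod n) :=
  Equiv.ofBijective (mfun n y a b) (Finite.injective_iff_bijective.mp (mfun_inj n y a b))

lemma mPerm_apply (i : ZMod n) : mPerm n y a b i = mfun n y a b i := rfl

lemma PP_eq_indicator (k : ZMod n) {J : ℕ} (hJ : J < n) :
    PP n y a b k.val J = if J = (mPerm n y a b k).val then 1 else 0 := by
  rw [mPerm_apply]
  have hspec := mfun_spec n y a b k
  split_ifs with h
  · rw [h]; exact hspec.2
  · by_contra hne
    have h1 := PP_nonneg n y a b k.val J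
    have h2 := PP_le_one n y a b k.val J
    have : PP n y a b k.val J = 1 := by omega
    have huniq := PP_row_exists_unique n y a b (ZMod.val_lt k)
    exact h (huniq.unique ⟨hJ, this⟩ ⟨hspec.1, hspec.2⟩)

lemma Kn_mPerm {I J : ℕ} (hI : I < n) (hJ : J < n) :
    Kn n (mPerm n y a b) I J = MM n y a b I J := by
  have step1 : ∀ k : ZMod n,
      (if k.val ≤ I ∧ (mPerm n y a b k).val ≤ J then (1:ℤ) else 0)
        = if k.val ≤ I then (∑ J' ∈ Finset.range (J+1), PP n y a b k.val J') else 0 := by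
    intro k
    have hinner : ∑ J' ∈ Finset.range (J+1), PP n y a b k.val J'
        = if (mPerm n y a b k).val ≤ J then (1:ℤ) else 0 := by
      have : ∀ J' ∈ Finset.range (J+1), PP n y a b k.val J'
          = if J' = (mPerm n y a b k).val then (1:ℤ) else 0 := by
        intro J' hJ'
        exact PP_eq_indicator n y a b k (by have := Finset.mem_range.mp hJ'; omega)
      rw [Finset.sum_congr rfl this, Finset.sum_ite_eq' (Finset.range (J+1))]
      simp only [Finset.mem_range]
      split_ifs with h1 h2 h3 <;> first | rfl | omega
    rw [hinner]
    split_ifs with h1 h2 h3 <;> first | rfl | (exfalso; tauto)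
  rw [Kn, Finset.sum_congr rfl (fun k _ => step1 k),
    sum_val n (fun K => if K ≤ I then (∑ J' ∈ Finset.range (J+1), PP n y a b K J') else 0)]
  have hfilter : ∑ K ∈ Finset.range n,
      (if K ≤ I then (∑ J' ∈ Finset.range (J+1), PP n y a b K J') else 0)
      = ∑ K ∈ Finset.range (I+1), ∑ J' ∈ Finset.range (J+1), PP n y a b K J' := by
    rw [← Finset.sum_filter]
    apply Finset.sum_congr
    · ext K; simp only [Finset.mem_filter, Finset.mem_range]; omega
    · intro K _; rfl
  rw [hfilter]
  have hinner2 : ∀ K, ∑ J' ∈ Finset.range (J+1), PP n y a b K J'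
      = EE n y a b (K+1) (J+1) - EE n y a b K (J+1) := by
    intro K
    have key : ∀ J', PP n y a b K J'
        = (EE n y a b (K+1) (J'+1) - EE n y a b K (J'+1))
          - (EE n y a b (K+1) J' - EE n y a b K J') := by
      intro J'; simp only [PP]; ring
    have htel := Finset.sum_range_sub (fun X => EE n y a b (K+1) X - EE n y a b K X) (J+1)
    rw [Finset.sum_congr rfl (fun J' _ => key J'), htel,
      EE_zero n y a b (Or.inr rfl), EE_zero n y a b (Or.inr rfl)]
    ring
  have htel2 := Finset.sum_range_sub (fun X => EE n y a b X (J+1)) (I+1)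
  rw [Finset.sum_congr rfl (fun K _ => hinner2 K), htel2]
  rw [EE_zero n y a b (Or.inl rfl), EE_pos n y a b (by omega) (by omega)]
  simp only [Nat.add_sub_cancel, Nat.sub_self]
  ring

lemma KK_mPerm (i j : ZMod n) :
    KK n (mPerm n y a b) i j = MM n y a b i.val j.val :=
  Kn_mPerm n y a b (ZMod.val_lt i) (ZMod.val_lt j)

end GD

namespace GD
variable (n : ℕ) [NeZero n]
variable (y : Equiv.Perm (ZMod n))
variable (a : {j : ZMod n // j ≠ (n : ZMod n) - 1} → ℕ)
variable (b : {i : ZMod n // i ≠ (n : ZMod n) - 1} → ℕ)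

lemma mPerm_mem : mPerm n y a b ∈ Gset n a b y := by
  rw [mem_Gset_iff]
  intro i j
  have h1 := KK_mPerm n y a b i j
  have h2 := MM_ge_LB n y a b (ZMod.val_lt i) (ZMod.val_lt j)
  have h3 := LB_KK n y a b i j
  omega

lemma member_iff (x : Equiv.Perm (ZMod n)) :
    x ∈ Gset n a b y ↔ gridLE n (mPerm n y a b) x := by
  rw [mem_Gset_iff, gridLE_iff]
  constructor
  · intro h i j
    rw [KK_mPerm]
    apply MM_le
    rintro (_ | p)
    · exact Kn_nonneg n x i.val j.val
    · have hx := h p.1 p.2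
      have hlb := LB_KK n y a b p.1 p.2
      have lip1 := Kn_lip_left n x i.val p.1.val p.2.val
      have lip2 := Kn_lip_right n x i.val j.val p.2.val
      have hd1 : KK n x p.1 p.2 = Kn n x p.1.val p.2.val := rfl
      have hd2 : KK n x i j = Kn n x i.val j.val := rfl
      simp only [TT, Option.elim]
      omega
  · intro h i j
    have h1 := h i j
    have h2 := (mem_Gset_iff n (a := a) (b := b) y (mPerm n y a b)).mp (mPerm_mem n y a b) i j
    omega

lemma swap_diff {J0 : ℕ} (h1 : J0 + 1 < n) (i j : ZMod n) :
    KK n 1 i j - KK n (Equiv.swap ((J0 : ℕ) : ZMod n) (((J0+1 : ℕ)) : ZMod n)) i j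
      = if i.val = J0 ∧ j.val = J0 then 1 else 0 := by
  have hu : ((J0 : ℕ) : ZMod n).val = J0 := ZMod.val_cast_of_lt (by omega)
  have hv : (((J0+1 : ℕ)) : ZMod n).val = J0 + 1 := ZMod.val_cast_of_lt h1
  have huv : ((J0 : ℕ) : ZMod n) ≠ (((J0+1 : ℕ)) : ZMod n) := by
    intro h
    have := congrArg ZMod.val h
    rw [hu, hv] at this
    omega
  rw [KK, KK, Kn, Kn, ← Finset.sum_sub_distrib]
  have hterm : ∀ k ∈ (Finset.univ : Finset (ZMod n)),
      (if k.val ≤ i.val ∧ ((1 : Equiv.Perm (ZMod n)) k).val ≤ j.val then (1:ℤ) else 0)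
        - (if k.val ≤ i.val ∧
            ((Equiv.swap ((J0 : ℕ) : ZMod n) (((J0+1 : ℕ)) : ZMod n)) k).val ≤ j.val
            then 1 else 0)
      = (if k = ((J0 : ℕ) : ZMod n) then
            ((if J0 ≤ i.val ∧ J0 ≤ j.val then (1:ℤ) else 0)
              - (if J0 ≤ i.val ∧ J0+1 ≤ j.val then 1 else 0)) else 0)
        + (if k = (((J0+1 : ℕ)) : ZMod n) then
            ((if J0+1 ≤ i.val ∧ J0+1 ≤ j.val then (1:ℤ) else 0)
              - (if J0+1 ≤ i.val ∧ J0 ≤ j.val then 1 else 0)) else 0) := by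
    intro k _
    by_cases hk : k = ((J0 : ℕ) : ZMod n)
    · rw [hk, if_pos rfl, if_neg huv, Equiv.swap_apply_left, Equiv.Perm.one_apply, hu, hv]
      ring
    · by_cases hk2 : k = (((J0+1 : ℕ)) : ZMod n)
      · rw [hk2, if_neg (show ¬((((J0+1 : ℕ)) : ZMod n) = ((J0 : ℕ) : ZMod n)) from
            fun h => huv h.symm), if_pos rfl, Equiv.swap_apply_right, Equiv.Perm.one_apply,
            hu, hv]
        ring
      · rw [if_neg hk, if_neg hk2, Equiv.Perm.one_apply,
          Equiv.swap_apply_of_ne_of_ne hk hk2]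
        ring
  rw [Finset.sum_congr rfl hterm, Finset.sum_add_distrib,
    Finset.sum_ite_eq' Finset.univ, Finset.sum_ite_eq' Finset.univ]
  simp only [Finset.mem_univ, if_true]
  split_ifs <;> omega

end GD

/-- Lemma 3.7: `G^{a,b,y}` has a unique minimum `m`, so that `G^{a,b,y} = [m, x^Id]`;
moreover `m` is the identity iff `a = 0`, `b = 0` and `y` is the identity. -/
theorem Gset_has_minimum (n : ℕ) (hn : 1 ≤ n) (y : Equiv.Perm (ZMod n))
    (a : {j : ZMod n // j ≠ (n : ZMod n) - 1} → ℕ)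
    (b : {i : ZMod n // i ≠ (n : ZMod n) - 1} → ℕ) :
    ∃ m : Equiv.Perm (ZMod n), m ∈ Gset n a b y ∧
      (∀ x : Equiv.Perm (ZMod n), x ∈ Gset n a b y ↔ gridLE n m x) ∧
      (m = 1 ↔ (a = 0 ∧ b = 0 ∧ y = 1)) := by
  haveI : NeZero n := ⟨by omega⟩
  refine ⟨GD.mPerm n y a b, GD.mPerm_mem n y a b, fun x => GD.member_iff n y a b x, ?_⟩
  constructor
  · intro hm
    have hyG : y ∈ Gset n a b y := by
      rw [GD.mem_Gset_iff]
      intro i j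
      have := GD.abf_nonneg n (a := a) (b := b) i j
      linarith
    have hy1 : y = 1 := by
      have hle := (GD.member_iff n y a b y).mp hyG
      rw [hm, GD.gridLE_iff] at hle
      apply GD.KK_inj n
      intro i j
      exact le_antisymm (GD.Kn_le_one n y i.val j.val) (hle i j)
    subst hy1
    refine ⟨?_, ?_, rfl⟩
    · funext j0
      show a j0 = 0
      by_contra ha
      have ha1 : 1 ≤ a j0 := Nat.one_le_iff_ne_zero.mpr ha
      have hvne : j0.1.val ≠ n - 1 := fun h => j0.2 (by
        have := ZMod.val_injective n (show j0.1.val = ((n : ZMod n) - 1).val by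
          rw [h, GD.val_c])
        exact this)
      have hJ0n : j0.1.val + 1 < n := by have := ZMod.val_lt j0.1; omega
      have hdiff := GD.swap_diff n hJ0n
      have hxG : Equiv.swap ((j0.1.val : ℕ) : ZMod n) (((j0.1.val + 1 : ℕ)) : ZMod n)
          ∈ Gset n a b 1 := by
        rw [GD.mem_Gset_iff]
        intro i j
        have hd := hdiff i j
        by_cases hij : i.val = j0.1.val ∧ j.val = j0.1.val
        · rw [if_pos hij] at hd
          have hj : j = j0.1 := ZMod.val_injective n hij.2
          have habf : GD.abf n a b i j
              = (if h : i = (n : ZMod n) - 1 then 0 else (b ⟨i, h⟩ : ℤ)) + (a j0 : ℤ) := by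
            rw [GD.abf, hj, dif_neg j0.2]
          have hb0 : 0 ≤ (if h : i = (n : ZMod n) - 1 then (0:ℤ) else (b ⟨i, h⟩ : ℤ)) := by
            split_ifs <;> positivity
          omega
        · rw [if_neg hij] at hd
          have := GD.abf_nonneg n (a := a) (b := b) i j
          omega
      have hlex := (GD.member_iff n 1 a b _).mp hxG
      rw [hm, GD.gridLE_iff] at hlex
      have h1 := hlex j0.1 j0.1
      have hd := hdiff j0.1 j0.1
      rw [if_pos ⟨rfl, rfl⟩] at hd
      omega
    · funext i0
      show b i0 = 0
      by_contra hb
      have hb1 : 1 ≤ b i0 := Nat.one_le_iff_ne_zero.mpr hb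
      have hvne : i0.1.val ≠ n - 1 := fun h => i0.2 (by
        have := ZMod.val_injective n (show i0.1.val = ((n : ZMod n) - 1).val by
          rw [h, GD.val_c])
        exact this)
      have hI0n : i0.1.val + 1 < n := by have := ZMod.val_lt i0.1; omega
      have hdiff := GD.swap_diff n hI0n
      have hxG : Equiv.swap ((i0.1.val : ℕ) : ZMod n) (((i0.1.val + 1 : ℕ)) : ZMod n)
          ∈ Gset n a b 1 := by
        rw [GD.mem_Gset_iff]
        intro i j
        have hd := hdiff i j
        by_cases hij : i.val = i0.1.val ∧ j.val = i0.1.val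
        · rw [if_pos hij] at hd
          have hi : i = i0.1 := ZMod.val_injective n hij.1
          have habf : GD.abf n a b i j
              = (b i0 : ℤ) + (if h : j = (n : ZMod n) - 1 then 0 else (a ⟨j, h⟩ : ℤ)) := by
            rw [GD.abf, hi, dif_neg i0.2]
          have ha0 : 0 ≤ (if h : j = (n : ZMod n) - 1 then (0:ℤ) else (a ⟨j, h⟩ : ℤ)) := by
            split_ifs <;> positivity
          omega
        · rw [if_neg hij] at hd
          have := GD.abf_nonneg n (a := a) (b := b) i j
          omega
      have hlex := (GD.member_iff n 1 a b _).mp hxG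
      rw [hm, GD.gridLE_iff] at hlex
      have h1 := hlex i0.1 i0.1
      have hd := hdiff i0.1 i0.1
      rw [if_pos ⟨rfl, rfl⟩] at hd
      omega
  · rintro ⟨ha, hb, hy⟩
    subst ha; subst hb; subst hy
    apply GD.KK_inj n
    intro i j
    have h1 := GD.Kn_le_one n (GD.mPerm n 1 0 0) i.val j.val
    have h2 := (GD.mem_Gset_iff n (a := 0) (b := 0) 1 _).mp (GD.mPerm_mem n 1 0 0) i j
    have h3 : GD.abf n 0 0 i j = 0 := by
      rw [GD.abf]; split_ifs <;> simp
    have hd1 : GD.KK n (GD.mPerm n 1 0 0) i j = GD.Kn n (GD.mPerm n 1 0 0) i.val j.val := rfl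
    have hd2 : GD.KK n 1 i j = GD.Kn n 1 i.val j.val := rfl
    omega
end

section
/- For all permutations σ, τ ∈ Equiv.Perm (ZMod n): there exists a positive domain D ∈ 𝒟⁺(τ, σ) with A(D) = 0 and B(D) = 0 if and only if τ ≤_B σ in the Bruhat order. (Equivalently, the partial order ≼ on grid states is the opposite of the Bruhat order on the symmetric group.) -/
/-- An adjacent transposition of `ZMod n`: `Equiv.swap p (p+1)` with `p ≠ n - 1`. -/
def IsAdjTrans (n : ℕ) (t : Equiv.Perm (ZMod n)) : Prop :=
  ∃ p : ZMod n, p ≠ (n : ZMod n) - 1 ∧ t = Equiv.swap p (p + 1)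

/-- A word for `σ`: a list of adjacent transpositions with product `σ`. -/
def IsWord (n : ℕ) (L : List (Equiv.Perm (ZMod n))) (σ : Equiv.Perm (ZMod n)) : Prop :=
  (∀ t ∈ L, IsAdjTrans n t) ∧ L.prod = σ

/-- A reduced word for `σ`: a word for `σ` of minimal length. -/
def IsReducedWord (n : ℕ) (L : List (Equiv.Perm (ZMod n))) (σ : Equiv.Perm (ZMod n)) : Prop :=
  IsWord n L σ ∧ ∀ L' : List (Equiv.Perm (ZMod n)), IsWord n L' σ → L.length ≤ L'.length

/-- Bruhat order: `τ ≤_B σ` iff some reduced word for `σ` contains a reduced word for `τ`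
as a (not-necessarily-consecutive) subsequence. -/
def BruhatLE (n : ℕ) (τ σ : Equiv.Perm (ZMod n)) : Prop :=
  ∃ (Lσ Lτ : List (Equiv.Perm (ZMod n))),
    IsReducedWord n Lσ σ ∧ IsReducedWord n Lτ τ ∧ Lτ.Sublist Lσ


namespace GridBruhat

variable {n : ℕ} [NeZero n]

lemma neg_one_val : ((-1 : ZMod n)).val = n - 1 := by
  rcases n with _ | m
  · exact absurd rfl (NeZero.ne 0)
  · simpa using ZMod.val_neg_one m

lemma eq_neg_one_iff_val {i : ZMod n} : i = -1 ↔ i.val = n - 1 := by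
  constructor
  · rintro rfl; exact neg_one_val
  · intro h; apply ZMod.val_injective; rw [h, neg_one_val]

lemma val_lt' (i : ZMod n) : i.val < n := ZMod.val_lt i

/-- The rank matrix: number of `k` with `k.val ≥ a` and `(π k).val ≥ b`, as an integer. -/
def Rmat (π : Equiv.Perm (ZMod n)) (a b : ℕ) : ℤ :=
  ∑ k : ZMod n, if a ≤ k.val ∧ b ≤ (π k).val then 1 else 0

lemma Rmat_nonneg (π : Equiv.Perm (ZMod n)) (a b : ℕ) : 0 ≤ Rmat π a b :=
  Finset.sum_nonneg fun k _ => by split <;> norm_num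

lemma Rmat_left_ge (π : Equiv.Perm (ZMod n)) {a : ℕ} (ha : n ≤ a) (b : ℕ) : Rmat π a b = 0 := by
  apply Finset.sum_eq_zero
  intro k _
  have := val_lt' k
  rw [if_neg]; omega

lemma Rmat_right_ge (π : Equiv.Perm (ZMod n)) (a : ℕ) {b : ℕ} (hb : n ≤ b) : Rmat π a b = 0 := by
  apply Finset.sum_eq_zero
  intro k _
  have := val_lt' (π k)
  rw [if_neg]; omega

/-- Row-step identity for the rank matrix. -/
lemma Rmat_succ_left (π : Equiv.Perm (ZMod n)) (i : ZMod n) (b : ℕ) :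
    Rmat π i.val b = Rmat π (i.val + 1) b + (if b ≤ (π i).val then 1 else 0) := by
  have key : ∀ k : ZMod n,
      (if i.val ≤ k.val ∧ b ≤ (π k).val then (1:ℤ) else 0) =
        (if i.val + 1 ≤ k.val ∧ b ≤ (π k).val then 1 else 0) +
          (if k = i then (if b ≤ (π i).val then 1 else 0) else 0) := by
    intro k
    by_cases hk : k = i
    · subst hk
      have h2 : ¬(k.val + 1 ≤ k.val ∧ b ≤ (π k).val) := fun h => by omega
      rw [if_neg h2, zero_add, if_pos rfl]
      by_cases hb : b ≤ (π k).val
      · rw [if_pos ⟨le_refl _, hb⟩, if_pos hb]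
      · rw [if_neg (fun h => hb h.2), if_neg hb]
    · have hv : k.val ≠ i.val := fun h => hk (ZMod.val_injective n h)
      rw [if_neg hk, add_zero]
      by_cases h1 : i.val ≤ k.val ∧ b ≤ (π k).val
      · rw [if_pos h1, if_pos ⟨by omega, h1.2⟩]
      · rw [if_neg h1, if_neg (fun h => h1 ⟨by omega, h.2⟩)]
  rw [Rmat, Finset.sum_congr rfl (fun k _ => key k), Finset.sum_add_distrib,
    Finset.sum_ite_eq' Finset.univ i, if_pos (Finset.mem_univ i)]
  rfl

/-- For `a = 0` the rank matrix does not depend on the permutation. -/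
lemma Rmat_zero_left (π π' : Equiv.Perm (ZMod n)) (b : ℕ) : Rmat π 0 b = Rmat π' 0 b := by
  have h : ∀ ρ : Equiv.Perm (ZMod n),
      Rmat ρ 0 b = ∑ v : ZMod n, if b ≤ v.val then (1:ℤ) else 0 := by
    intro ρ
    rw [Rmat, ← Equiv.sum_comp ρ (fun v => if b ≤ v.val then (1:ℤ) else 0)]
    apply Finset.sum_congr rfl
    intro k _
    simp
  rw [h π, h π']

lemma Rmat_zero_right (π π' : Equiv.Perm (ZMod n)) (a : ℕ) : Rmat π a 0 = Rmat π' a 0 := by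
  unfold Rmat
  apply Finset.sum_congr rfl
  intro k _
  simp



lemma val_add_one_of_lt {i : ZMod n} (h : i.val + 1 < n) : (i + 1).val = i.val + 1 := by
  have : (i + 1 : ZMod n) = ((i.val + 1 : ℕ) : ZMod n) := by
    push_cast [ZMod.natCast_zmod_val]; ring
  rw [this, ZMod.val_cast_of_lt h]

lemma val_sub_one {i : ZMod n} (h : i ≠ 0) : (i - 1).val = i.val - 1 := by
  have h1 : 1 ≤ i.val := by
    rcases Nat.eq_zero_or_pos i.val with h0 | h0
    · exact absurd ((ZMod.val_eq_zero i).1 h0) h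
    · omega
  have : (i - 1 : ZMod n) = ((i.val - 1 : ℕ) : ZMod n) := by
    have : ((i.val - 1 : ℕ) : ZMod n) = ((i.val : ℕ) : ZMod n) - 1 := by
      push_cast [Nat.cast_sub h1]; ring
    rw [this, ZMod.natCast_zmod_val]
  rw [this, ZMod.val_cast_of_lt (by have := val_lt' i; omega)]

/-- The canonical domain from `τ` to `σ`. -/
def Ed (τ σ : Equiv.Perm (ZMod n)) (i j : ZMod n) : ℤ :=
  Rmat τ (i.val + 1) (j.val + 1) - Rmat σ (i.val + 1) (j.val + 1)

lemma Ed_neg_one_left (τ σ : Equiv.Perm (ZMod n)) (j : ZMod n) : Ed τ σ (-1) j = 0 := by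
  have h : n ≤ (-1 : ZMod n).val + 1 := by have := NeZero.pos n; rw [neg_one_val]; omega
  rw [Ed, Rmat_left_ge _ h, Rmat_left_ge _ h, sub_zero]

lemma Ed_neg_one_right (τ σ : Equiv.Perm (ZMod n)) (i : ZMod n) : Ed τ σ i (-1) = 0 := by
  have h : n ≤ (-1 : ZMod n).val + 1 := by have := NeZero.pos n; rw [neg_one_val]; omega
  rw [Ed, Rmat_right_ge _ _ h, Rmat_right_ge _ _ h, sub_zero]

/-- Horizontal difference formula for the canonical domain. -/
lemma Ed_row_diff (τ σ : Equiv.Perm (ZMod n)) (i j : ZMod n) :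
    Ed τ σ i j - Ed τ σ (i - 1) j =
      (if j.val + 1 ≤ (σ i).val then 1 else 0) - (if j.val + 1 ≤ (τ i).val then 1 else 0) := by
  by_cases hi : i = 0
  · subst hi
    rw [zero_sub, Ed_neg_one_left, sub_zero]
    have e1 := Rmat_succ_left τ (0 : ZMod n) (j.val + 1)
    have e2 := Rmat_succ_left σ (0 : ZMod n) (j.val + 1)
    rw [ZMod.val_zero] at e1 e2
    have e3 := Rmat_zero_left τ σ (j.val + 1)
    rw [Ed, ZMod.val_zero]
    omega
  · have hv1 : 1 ≤ i.val := by
      rcases Nat.eq_zero_or_pos i.val with h0 | h0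
      · exact absurd ((ZMod.val_eq_zero i).1 h0) hi
      · omega
    have hsub := val_sub_one hi
    have e1 := Rmat_succ_left τ i (j.val + 1)
    have e2 := Rmat_succ_left σ i (j.val + 1)
    rw [Ed, Ed, hsub]
    have hh : i.val - 1 + 1 = i.val := by omega
    rw [hh]
    omega

/-- Vertical step for the indicator `[j.val + 1 ≤ v.val]`. -/
lemma phi_step (v j : ZMod n) :
    (if j.val + 1 ≤ v.val then (1:ℤ) else 0) - (if (j - 1).val + 1 ≤ v.val then 1 else 0) =
      (if j = 0 then 1 else 0) - (if v = j then 1 else 0) := by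
  by_cases hj : j = 0
  · subst hj
    rw [zero_sub, neg_one_val, ZMod.val_zero, if_pos rfl]
    have hv := val_lt' v
    have h2 : ¬(n - 1 + 1 ≤ v.val) := by have := NeZero.pos n; omega
    rw [if_neg h2, sub_zero]
    by_cases hv0 : v = 0
    · subst hv0
      rw [ZMod.val_zero, if_neg (by omega : ¬(0 + 1 ≤ 0)), if_pos rfl]
      norm_num
    · have : 1 ≤ v.val := by
        rcases Nat.eq_zero_or_pos v.val with h0 | h0
        · exact absurd ((ZMod.val_eq_zero v).1 h0) hv0
        · omega
      rw [if_pos (by omega : 0 + 1 ≤ v.val), if_neg hv0]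
      ring
  · rw [if_neg hj, val_sub_one hj]
    have hv1 : 1 ≤ j.val := by
      rcases Nat.eq_zero_or_pos j.val with h0 | h0
      · exact absurd ((ZMod.val_eq_zero j).1 h0) hj
      · omega
    have hvj : v = j ↔ v.val = j.val :=
      ⟨fun h => by rw [h], fun h => ZMod.val_injective n h⟩
    by_cases hvq : v = j
    · subst hvq
      rw [if_neg (by omega : ¬(v.val + 1 ≤ v.val)),
        if_pos (by omega : v.val - 1 + 1 ≤ v.val), if_pos rfl]
    · have hne : v.val ≠ j.val := fun h => hvq (hvj.2 h)
      rw [if_neg hvq, sub_zero]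
      by_cases h1 : j.val + 1 ≤ v.val
      · rw [if_pos h1, if_pos (by omega)]
        ring
      · rw [if_neg h1, if_neg (by omega)]
        ring

lemma Ed_isGridDomain (τ σ : Equiv.Perm (ZMod n)) : IsGridDomain n τ σ (Ed τ σ) := by
  have hcast : ((n : ZMod n) - 1 : ZMod n) = -1 := by rw [ZMod.natCast_self, zero_sub]
  constructor
  · rw [hcast, Ed_neg_one_left]
  · intro i j
    have h1 := Ed_row_diff τ σ i j
    have h2 := Ed_row_diff τ σ i (j - 1)
    have h3 := phi_step (σ i) j
    have h4 := phi_step (τ i) j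
    have hτ : τ i = j ↔ j = τ i := eq_comm
    have hσ : σ i = j ↔ j = σ i := eq_comm
    by_cases ha : τ i = j <;> by_cases hb : σ i = j <;>
      simp only [if_pos, if_neg, ha, hb] at * <;> omega

/-- Rank-matrix dominance. -/
def Dom (τ σ : Equiv.Perm (ZMod n)) : Prop := ∀ a b : ℕ, Rmat σ a b ≤ Rmat τ a b

lemma neg_one_val_lt {i : ZMod n} (h : i ≠ -1) : i.val < n - 1 := by
  have h1 := val_lt' i
  have h2 : i.val ≠ n - 1 := fun hh => h (eq_neg_one_iff_val.2 hh)
  omega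

/-- Uniqueness: any domain with vanishing top row and right column equals `Ed`. -/
lemma domain_eq_Ed {τ σ : Equiv.Perm (ZMod n)} {D : ZMod n → ZMod n → ℤ}
    (hD : IsGridDomain n τ σ D)
    (htop : ∀ j, D (-1) j = 0) (hright : ∀ i, D i (-1) = 0) :
    ∀ i j, D i j = Ed τ σ i j := by
  have hE := (Ed_isGridDomain τ σ).2
  have hDr := hD.2
  suffices H : ∀ m : ℕ, ∀ i j : ZMod n, (n - 1 - i.val) + (n - 1 - j.val) = m →
      D i j = Ed τ σ i j by
    intro i j; exact H _ i j rfl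
  intro m
  induction m using Nat.strong_induction_on with
  | _ m IH =>
    intro i j hm
    by_cases hi : i = -1
    · subst hi; rw [htop, Ed_neg_one_left]
    by_cases hj : j = -1
    · subst hj; rw [hright, Ed_neg_one_right]
    have hi' : i.val < n - 1 := neg_one_val_lt hi
    have hj' : j.val < n - 1 := neg_one_val_lt hj
    have hn1 : 1 ≤ n := NeZero.pos n
    have hiv : (i + 1).val = i.val + 1 := val_add_one_of_lt (by omega)
    have hjv : (j + 1).val = j.val + 1 := val_add_one_of_lt (by omega)
    have r1 := hDr (i + 1) (j + 1)
    have r2 := hE (i + 1) (j + 1)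
    rw [add_sub_cancel_right, add_sub_cancel_right] at r1 r2
    have e1 : D i (j + 1) = Ed τ σ i (j + 1) := by
      apply IH (n - 1 - i.val + (n - 1 - (j + 1).val)) (by omega) _ _ rfl
    have e2 : D (i + 1) j = Ed τ σ (i + 1) j := by
      apply IH (n - 1 - (i + 1).val + (n - 1 - j.val)) (by omega) _ _ rfl
    have e3 : D (i + 1) (j + 1) = Ed τ σ (i + 1) (j + 1) := by
      apply IH (n - 1 - (i + 1).val + (n - 1 - (j + 1).val)) (by omega) _ _ rfl
    rw [e1, e2, e3] at r1
    linarith [r1, r2]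

/-- Part I: existence of a positive boundary-zero domain iff rank dominance. -/
lemma lhs_iff_dom (τ σ : Equiv.Perm (ZMod n)) :
    (∃ D : ZMod n → ZMod n → ℤ,
        IsGridPosDomain n τ σ D ∧ colA n D = 0 ∧ rowB n D = 0) ↔ Dom τ σ := by
  have hcast : ((n : ZMod n) - 1 : ZMod n) = -1 := by rw [ZMod.natCast_self, zero_sub]
  constructor
  · rintro ⟨D, ⟨hdom, hpos⟩, hA, hB⟩
    have htop : ∀ j, D (-1) j = 0 := by
      intro j
      by_cases hj : j = -1
      · subst hj; rw [← hcast]; exact hdom.1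
      · have := congrFun hA ⟨j, by rw [hcast]; exact hj⟩
        rw [← hcast]; exact this
    have hright : ∀ i, D i (-1) = 0 := by
      intro i
      by_cases hi : i = -1
      · subst hi; rw [← hcast]; exact hdom.1
      · have := congrFun hB ⟨i, by rw [hcast]; exact hi⟩
        rw [← hcast]; exact this
    have hEq := domain_eq_Ed hdom htop hright
    intro a b
    rcases Nat.eq_zero_or_pos a with ha | ha
    · subst ha; exact le_of_eq (Rmat_zero_left σ τ b)
    rcases Nat.eq_zero_or_pos b with hb | hb
    · subst hb; exact le_of_eq (Rmat_zero_right σ τ a)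
    by_cases han : n < a
    · rw [Rmat_left_ge σ (by omega) b, Rmat_left_ge τ (by omega) b]
    by_cases hbn : n < b
    · rw [Rmat_right_ge σ a (by omega), Rmat_right_ge τ a (by omega)]
    · -- 1 ≤ a ≤ n, 1 ≤ b ≤ n
      set i : ZMod n := ((a - 1 : ℕ) : ZMod n) with hidef
      set j : ZMod n := ((b - 1 : ℕ) : ZMod n) with hjdef
      have hiv : i.val = a - 1 := ZMod.val_cast_of_lt (by omega)
      have hjv : j.val = b - 1 := ZMod.val_cast_of_lt (by omega)
      have := hpos i j
      rw [hEq i j, Ed, hiv, hjv] at this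
      have ha' : a - 1 + 1 = a := by omega
      have hb' : b - 1 + 1 = b := by omega
      rw [ha', hb'] at this
      linarith
  · intro hdom
    refine ⟨Ed τ σ, ⟨Ed_isGridDomain τ σ, fun i j => ?_⟩, ?_, ?_⟩
    · rw [Ed]; have := hdom (i.val + 1) (j.val + 1); linarith
    · funext j
      simp only [colA, Pi.zero_apply, hcast]
      exact Ed_neg_one_left τ σ j.1
    · funext i
      simp only [rowB, Pi.zero_apply, hcast]
      exact Ed_neg_one_right τ σ i.1

section Words

variable {p : ZMod n}

lemma val_ne_of_ne {k l : ZMod n} (h : k ≠ l) : k.val ≠ l.val :=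
  fun hh => h (ZMod.val_injective n hh)

lemma succ_val (hp : p.val + 1 < n) : (p + 1).val = p.val + 1 := val_add_one_of_lt hp

lemma p_ne_succ (hp : p.val + 1 < n) : p ≠ p + 1 := by
  intro h
  have := congrArg ZMod.val h
  rw [succ_val hp] at this
  omega

/-- Swapping adjacent values preserves the `val`-order except on the swapped pair. -/
lemma swap_val_lt_iff (hp : p.val + 1 < n) {k l : ZMod n}
    (hkl : ¬(k = p ∧ l = p + 1)) (hlk : ¬(k = p + 1 ∧ l = p)) :
    ((Equiv.swap p (p + 1)) k).val < ((Equiv.swap p (p + 1)) l).val ↔ k.val < l.val := by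
  have hs := succ_val hp
  rcases eq_or_ne k p with rfl | hk1
  · have hl2 : l ≠ k + 1 := fun h => hkl ⟨rfl, h⟩
    rcases eq_or_ne l k with rfl | hl1
    · rw [Equiv.swap_apply_left]
      omega
    · rw [Equiv.swap_apply_left, Equiv.swap_apply_of_ne_of_ne hl1 hl2]
      have h1 := val_ne_of_ne hl1
      have h2 := val_ne_of_ne hl2
      rw [hs] at h2 ⊢
      omega
  rcases eq_or_ne k (p + 1) with rfl | hk2
  · have hl1 : l ≠ p := fun h => hlk ⟨rfl, h⟩
    rcases eq_or_ne l (p + 1) with rfl | hl2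
    · rw [Equiv.swap_apply_right]
      omega
    · rw [Equiv.swap_apply_right, Equiv.swap_apply_of_ne_of_ne hl1 hl2]
      have h1 := val_ne_of_ne hl1
      have h2 := val_ne_of_ne hl2
      rw [hs] at h2 ⊢
      omega
  · rw [Equiv.swap_apply_of_ne_of_ne hk1 hk2]
    rcases eq_or_ne l p with rfl | hl1
    · rw [Equiv.swap_apply_left]
      have h1 := val_ne_of_ne hk1
      have h2 := val_ne_of_ne hk2
      rw [hs] at h2 ⊢
      omega
    rcases eq_or_ne l (p + 1) with rfl | hl2
    · rw [Equiv.swap_apply_right]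
      have h1 := val_ne_of_ne hk1
      have h2 := val_ne_of_ne hk2
      rw [hs] at h2
      omega
    · rw [Equiv.swap_apply_of_ne_of_ne hl1 hl2]

/-- The inversion number, as an integer. -/
def invZ (σ : Equiv.Perm (ZMod n)) : ℤ :=
  ∑ q : ZMod n × ZMod n, if q.1.val < q.2.val ∧ (σ q.2).val < (σ q.1).val then 1 else 0

lemma invZ_nonneg (σ : Equiv.Perm (ZMod n)) : 0 ≤ invZ σ :=
  Finset.sum_nonneg fun q _ => by split <;> norm_num

lemma invZ_one : invZ (1 : Equiv.Perm (ZMod n)) = 0 := by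
  apply Finset.sum_eq_zero
  intro q _
  rw [if_neg]
  simp only [Equiv.Perm.one_apply]
  omega

/-- Right multiplication by an adjacent transposition changes `invZ` by `±1`. -/
lemma invZ_mul_swap (hp : p.val + 1 < n) (σ : Equiv.Perm (ZMod n)) :
    invZ (σ * Equiv.swap p (p + 1)) =
      invZ σ + (if (σ p).val < (σ (p + 1)).val then 1 else -1) := by
  set s := Equiv.swap p (p + 1) with hsdef
  have hss : ∀ x, s (s x) = x := fun x => Equiv.swap_apply_self p (p + 1) x
  -- reindex
  have step1 : invZ (σ * s) =
      ∑ q : ZMod n × ZMod n,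
        if (s q.1).val < (s q.2).val ∧ (σ q.2).val < (σ q.1).val then (1:ℤ) else 0 := by
    rw [invZ]
    rw [← Equiv.sum_comp (s.prodCongr s)
      (fun q : ZMod n × ZMod n =>
        if (s q.1).val < (s q.2).val ∧ (σ q.2).val < (σ q.1).val then (1:ℤ) else 0)]
    apply Finset.sum_congr rfl
    intro q _
    simp only [Equiv.prodCongr_apply, Prod.map, hss, Equiv.Perm.mul_apply]
    exact if_congr Iff.rfl rfl rfl
  rw [step1, invZ]
  have split : (∑ q : ZMod n × ZMod n,
        if (s q.1).val < (s q.2).val ∧ (σ q.2).val < (σ q.1).val then (1:ℤ) else 0)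
      - (∑ q : ZMod n × ZMod n,
        if q.1.val < q.2.val ∧ (σ q.2).val < (σ q.1).val then (1:ℤ) else 0)
      = (if (σ p).val < (σ (p + 1)).val then 1 else -1) := by
    rw [← Finset.sum_sub_distrib]
    have hne : ((p, p + 1) : ZMod n × ZMod n) ≠ (p + 1, p) := by
      intro h
      exact (p_ne_succ hp) (congrArg Prod.fst h)
    rw [Finset.sum_eq_add_of_mem ((p, p+1) : ZMod n × ZMod n) ((p+1, p) : ZMod n × ZMod n)
      (Finset.mem_univ _) (Finset.mem_univ _) hne ?_]
    · -- compute the two terms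
      have h1 : s p = p + 1 := Equiv.swap_apply_left p (p+1)
      have h2 : s (p + 1) = p := Equiv.swap_apply_right p (p+1)
      have hs := succ_val hp
      have hd : (σ p).val ≠ (σ (p+1)).val :=
        val_ne_of_ne (fun h => (p_ne_succ hp) (σ.injective h))
      simp only [h1, h2]
      split_ifs <;> omega
    · intro q _ hq
      have hq1 : ¬(q.1 = p ∧ q.2 = p + 1) := by
        intro ⟨u, v⟩; exact hq.1 (Prod.ext u v)
      have hq2 : ¬(q.1 = p + 1 ∧ q.2 = p) := by
        intro ⟨u, v⟩; exact hq.2 (Prod.ext u v)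
      have := swap_val_lt_iff hp hq1 hq2
      by_cases hc : q.1.val < q.2.val ∧ (σ q.2).val < (σ q.1).val
      · rw [if_pos hc, if_pos ⟨this.2 hc.1, hc.2⟩]; ring
      · rw [if_neg hc, if_neg ?_]
        · ring
        · intro ⟨u, v⟩; exact hc ⟨this.1 u, v⟩
  linarith [split]

/-- If a permutation has no descent then it is the identity. -/
lemma eq_one_of_no_descent {σ : Equiv.Perm (ZMod n)}
    (h : ∀ p : ZMod n, p.val + 1 < n → (σ p).val < (σ (p + 1)).val) : σ = 1 := by
  have hmono : ∀ a : ℕ, a + 1 < n →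
      (σ ((a : ℕ) : ZMod n)).val < (σ (((a + 1 : ℕ)) : ZMod n)).val := by
    intro a ha
    have hv : ((a : ℕ) : ZMod n).val = a := ZMod.val_cast_of_lt (by omega)
    have hcast : (((a + 1 : ℕ)) : ZMod n) = ((a : ℕ) : ZMod n) + 1 := by push_cast; ring
    rw [hcast]
    exact h _ (by rw [hv]; omega)
  -- lower bound
  have hlow : ∀ a : ℕ, a < n → a ≤ (σ ((a : ℕ) : ZMod n)).val := by
    intro a
    induction a with
    | zero => intro _; omega
    | succ a IH =>
      intro ha
      have h1 := IH (by omega)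
      have h2 := hmono a ha
      omega
  -- upper bound
  have hup : ∀ d : ℕ, d < n → (σ (((n - 1 - d : ℕ)) : ZMod n)).val ≤ n - 1 - d := by
    intro d
    induction d with
    | zero => intro _; have := val_lt' (σ (((n - 1 - 0 : ℕ)) : ZMod n)); omega
    | succ d IH =>
      intro hd
      have h1 := IH (by omega)
      have h2 := hmono (n - 1 - (d + 1)) (by omega)
      have he : n - 1 - (d + 1) + 1 = n - 1 - d := by omega
      rw [he] at h2
      omega
  have hfix : ∀ a : ℕ, a < n → (σ ((a : ℕ) : ZMod n)).val = a := by
    intro a ha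
    have h1 := hlow a ha
    have h2 := hup (n - 1 - a) (by omega)
    have he : n - 1 - (n - 1 - a) = a := by omega
    rw [he] at h2
    omega
  ext k
  have hk : k = ((k.val : ℕ) : ZMod n) := (ZMod.natCast_zmod_val k).symm
  have := hfix k.val (val_lt' k)
  rw [← hk] at this
  simp only [Equiv.Perm.one_apply]
  apply ZMod.val_injective
  exact this

lemma exists_descent {σ : Equiv.Perm (ZMod n)} (h : σ ≠ 1) :
    ∃ p : ZMod n, p.val + 1 < n ∧ (σ (p + 1)).val < (σ p).val := by
  by_contra hc
  push_neg at hc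
  apply h
  apply eq_one_of_no_descent
  intro p hp
  have h1 := hc p hp
  have h2 : σ p ≠ σ (p + 1) := fun hh => (p_ne_succ hp) (σ.injective hh)
  have := val_ne_of_ne h2
  omega

lemma descent_invZ_pos {σ : Equiv.Perm (ZMod n)} {p : ZMod n}
    (hp : p.val + 1 < n) (hd : (σ (p + 1)).val < (σ p).val) : 1 ≤ invZ σ := by
  rw [invZ]
  have hterm : (if (p : ZMod n).val < (p + 1).val ∧ (σ (p + 1)).val < (σ p).val
      then (1:ℤ) else 0) = 1 :=
    if_pos ⟨by rw [succ_val hp]; omega, hd⟩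
  have hs := Finset.single_le_sum
    (f := fun q : ZMod n × ZMod n =>
      if q.1.val < q.2.val ∧ (σ q.2).val < (σ q.1).val then (1:ℤ) else 0)
    (fun q _ => by split <;> norm_num)
    (Finset.mem_univ ((p, p + 1) : ZMod n × ZMod n))
  dsimp only at hs
  rw [hterm] at hs
  exact hs

lemma eq_one_of_invZ_eq_zero {σ : Equiv.Perm (ZMod n)} (h : invZ σ = 0) : σ = 1 := by
  by_contra hc
  obtain ⟨p, hp, hd⟩ := exists_descent hc
  have := descent_invZ_pos hp hd
  omega

lemma p_ne_top {p : ZMod n} (hp : p.val + 1 < n) : p ≠ (n : ZMod n) - 1 := by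
  rw [ZMod.natCast_self, zero_sub]
  intro h
  rw [eq_neg_one_iff_val] at h
  omega

lemma p_lt_of_ne_top {p : ZMod n} (hp : p ≠ (n : ZMod n) - 1) : p.val + 1 < n := by
  rw [ZMod.natCast_self, zero_sub] at hp
  have := neg_one_val_lt hp
  have := NeZero.pos n
  omega

/-- Every permutation has a word of length `invZ`. -/
lemma exists_word (σ : Equiv.Perm (ZMod n)) :
    ∃ L : List (Equiv.Perm (ZMod n)), (∀ t ∈ L, IsAdjTrans n t) ∧ L.prod = σ ∧
      (L.length : ℤ) = invZ σ := by
  suffices H : ∀ m : ℕ, ∀ σ : Equiv.Perm (ZMod n), (invZ σ).toNat = m →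
      ∃ L : List (Equiv.Perm (ZMod n)), (∀ t ∈ L, IsAdjTrans n t) ∧ L.prod = σ ∧
        (L.length : ℤ) = invZ σ by
    exact H _ σ rfl
  intro m
  induction m using Nat.strong_induction_on with
  | _ m IH =>
    intro σ hm
    by_cases h0 : invZ σ = 0
    · refine ⟨[], by simp, ?_, by simp [h0]⟩
      rw [List.prod_nil, (eq_one_of_invZ_eq_zero h0)]
    · have hσ1 : σ ≠ 1 := fun h => h0 (h ▸ invZ_one)
      obtain ⟨p, hp, hd⟩ := exists_descent hσ1
      have hw := invZ_mul_swap hp σ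
      rw [if_neg (by omega)] at hw
      have hnn := invZ_nonneg σ
      have hnn2 := invZ_nonneg (σ * Equiv.swap p (p + 1))
      obtain ⟨L, hL1, hL2, hL3⟩ := IH (invZ (σ * Equiv.swap p (p + 1))).toNat
        (by omega) _ rfl
      refine ⟨L ++ [Equiv.swap p (p + 1)], ?_, ?_, ?_⟩
      · intro t ht
        rcases List.mem_append.1 ht with h | h
        · exact hL1 t h
        · rw [List.mem_singleton.1 h]
          exact ⟨p, p_ne_top hp, rfl⟩
      · rw [List.prod_append, List.prod_singleton, hL2, mul_assoc,
          Equiv.swap_mul_self, mul_one]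
      · rw [List.length_append, List.length_singleton]
        push_cast
        omega

/-- Any word has length at least `invZ` of its product. -/
lemma invZ_le_word_length (L : List (Equiv.Perm (ZMod n))) (hL : ∀ t ∈ L, IsAdjTrans n t) :
    invZ L.prod ≤ (L.length : ℤ) := by
  induction L using List.reverseRecOn with
  | nil => simp [invZ_one]
  | append_singleton L t IH =>
    have hL' : ∀ u ∈ L, IsAdjTrans n u := fun u hu => hL u (List.mem_append_left _ hu)
    obtain ⟨p, hpt, rfl⟩ := hL t (List.mem_append_right _ (List.mem_singleton_self t))
    have hp := p_lt_of_ne_top hpt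
    have hw := invZ_mul_swap hp L.prod
    rw [List.prod_append, List.prod_singleton, List.length_append, List.length_singleton]
    have := IH hL'
    push_cast
    split_ifs at hw <;> omega

/-- Characterization of reduced words via `invZ`. -/
lemma isReducedWord_iff (L : List (Equiv.Perm (ZMod n))) (σ : Equiv.Perm (ZMod n)) :
    IsReducedWord n L σ ↔
      (∀ t ∈ L, IsAdjTrans n t) ∧ L.prod = σ ∧ (L.length : ℤ) = invZ σ := by
  constructor
  · rintro ⟨⟨h1, h2⟩, hmin⟩
    obtain ⟨L', hL'1, hL'2, hL'3⟩ := exists_word σ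
    have hle := hmin L' ⟨hL'1, hL'2⟩
    have hge := invZ_le_word_length L h1
    rw [h2] at hge
    refine ⟨h1, h2, ?_⟩
    omega
  · rintro ⟨h1, h2, h3⟩
    refine ⟨⟨h1, h2⟩, ?_⟩
    intro L' ⟨hL'1, hL'2⟩
    have := invZ_le_word_length L' hL'1
    rw [hL'2] at this
    omega

/-- Effect of an adjacent transposition on the rank matrix. -/
lemma Rmat_mul_swap (hp : p.val + 1 < n) (π : Equiv.Perm (ZMod n)) (a b : ℕ) :
    Rmat (π * Equiv.swap p (p + 1)) a b = Rmat π a b +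
      (if a = p.val + 1 then
        ((if b ≤ (π p).val then (1:ℤ) else 0) - (if b ≤ (π (p + 1)).val then 1 else 0))
      else 0) := by
  set s := Equiv.swap p (p + 1) with hsdef
  have hFsub : Rmat (π * s) a b - Rmat π a b =
      ∑ k : ZMod n, ((if a ≤ k.val ∧ b ≤ (π (s k)).val then (1:ℤ) else 0) -
        (if a ≤ k.val ∧ b ≤ (π k).val then 1 else 0)) := by
    rw [Finset.sum_sub_distrib]
    rfl
  have hsum : (∑ k : ZMod n, ((if a ≤ k.val ∧ b ≤ (π (s k)).val then (1:ℤ) else 0) -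
        (if a ≤ k.val ∧ b ≤ (π k).val then 1 else 0))) =
      (if a = p.val + 1 then
        ((if b ≤ (π p).val then (1:ℤ) else 0) - (if b ≤ (π (p + 1)).val then 1 else 0))
      else 0) := by
    rw [Finset.sum_eq_add_of_mem p (p + 1) (Finset.mem_univ _) (Finset.mem_univ _)
      (p_ne_succ hp) ?_]
    · rw [show s p = p + 1 from Equiv.swap_apply_left p (p + 1),
        show s (p + 1) = p from Equiv.swap_apply_right p (p + 1), succ_val hp]
      split_ifs <;> omega
    · intro k _ ⟨hk1, hk2⟩
      rw [show s k = k from Equiv.swap_apply_of_ne_of_ne hk1 hk2]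
      ring
  rw [hsum] at hFsub
  omega

/-- Covering relation: right-multiplying at an ascent goes up in dominance order. -/
lemma dom_cover (hp : p.val + 1 < n) {σ : Equiv.Perm (ZMod n)}
    (hasc : (σ p).val < (σ (p + 1)).val) : Dom σ (σ * Equiv.swap p (p + 1)) := by
  intro a b
  rw [Rmat_mul_swap hp]
  split_ifs <;> omega

/-- The two row-step identities needed in the lifting arguments. -/
lemma Rmat_row_steps (π : Equiv.Perm (ZMod n)) (hp : p.val + 1 < n) (b : ℕ) :
    Rmat π p.val b = Rmat π (p.val + 1) b + (if b ≤ (π p).val then (1:ℤ) else 0) ∧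
    Rmat π (p.val + 1) b =
      Rmat π (p.val + 2) b + (if b ≤ (π (p + 1)).val then (1:ℤ) else 0) := by
  refine ⟨Rmat_succ_left π p b, ?_⟩
  have h := Rmat_succ_left π (p + 1) b
  rw [succ_val hp] at h
  exact h

/-- Lifting (mixed case): if `σ` has a descent and `τ` an ascent at `p`,
dominance passes to `σ * s`. -/
lemma dom_lift_mixed (hp : p.val + 1 < n) {σ τ : Equiv.Perm (ZMod n)}
    (hdom : Dom τ σ) (hdesc : (σ (p + 1)).val < (σ p).val)
    (hasc : (τ p).val < (τ (p + 1)).val) : Dom τ (σ * Equiv.swap p (p + 1)) := by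
  intro a b
  rw [Rmat_mul_swap hp]
  by_cases ha : a = p.val + 1
  · rw [if_pos ha]
    subst ha
    obtain ⟨e1σ, e2σ⟩ := Rmat_row_steps σ hp b
    obtain ⟨e1τ, e2τ⟩ := Rmat_row_steps τ hp b
    have d1 := hdom p.val b
    have d2 := hdom (p.val + 1) b
    have d3 := hdom (p.val + 2) b
    split_ifs at * <;> omega
  · rw [if_neg ha, add_zero]
    exact hdom a b

/-- Lifting (same-direction case): if `σ` and `τ` move in the same direction at `p`,
dominance passes to the pair multiplied by `s`. -/
lemma dom_lift_same (hp : p.val + 1 < n) {σ τ : Equiv.Perm (ZMod n)}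
    (hdom : Dom τ σ)
    (hsame : ((σ p).val < (σ (p + 1)).val ↔ (τ p).val < (τ (p + 1)).val)) :
    Dom (τ * Equiv.swap p (p + 1)) (σ * Equiv.swap p (p + 1)) := by
  intro a b
  rw [Rmat_mul_swap hp, Rmat_mul_swap hp]
  by_cases ha : a = p.val + 1
  · rw [if_pos ha]
    subst ha
    obtain ⟨e1σ, e2σ⟩ := Rmat_row_steps σ hp b
    obtain ⟨e1τ, e2τ⟩ := Rmat_row_steps τ hp b
    have d1 := hdom p.val b
    have d2 := hdom (p.val + 1) b
    have d3 := hdom (p.val + 2) b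
    have hσ : (σ p).val ≠ (σ (p + 1)).val :=
      val_ne_of_ne fun h => (p_ne_succ hp) (σ.injective h)
    have hτ : (τ p).val ≠ (τ (p + 1)).val :=
      val_ne_of_ne fun h => (p_ne_succ hp) (τ.injective h)
    rcases (lt_or_gt_of_ne hσ) with hcσ | hcσ
    · have hcτ := hsame.1 hcσ
      split_ifs at * <;> omega
    · have hcτ : (τ (p + 1)).val < (τ p).val := by
        rcases lt_or_gt_of_ne hτ with h | h
        · exact absurd (hsame.2 h) (by omega)
        · exact h
      split_ifs at * <;> omega
  · rw [if_neg ha, if_neg ha, add_zero, add_zero]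
    exact hdom a b

/-- Dominance below the identity forces the identity. -/
lemma dom_one {τ : Equiv.Perm (ZMod n)} (hdom : Dom τ 1) : τ = 1 := by
  have hge : ∀ k : ZMod n, k.val ≤ (τ k).val := by
    intro k
    by_contra hc
    push_neg at hc
    set a := k.val with hadef
    have h1 : Rmat τ a a < Rmat (1 : Equiv.Perm (ZMod n)) a a := by
      unfold Rmat
      apply Finset.sum_lt_sum
      · intro x _
        simp only [Equiv.Perm.one_apply]
        split_ifs <;> omega
      · refine ⟨k, Finset.mem_univ k, ?_⟩
        simp only [Equiv.Perm.one_apply]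
        rw [if_neg (fun h => by omega)]
        split_ifs <;> omega
    have := hdom a a
    omega
  have hsum : ∑ k : ZMod n, (τ k).val = ∑ k : ZMod n, k.val :=
    Equiv.sum_comp τ ZMod.val
  have heq : ∀ k : ZMod n, k.val = (τ k).val := by
    have := (Finset.sum_eq_sum_iff_of_le (fun k _ => hge k)).1 hsum.symm
    intro k
    exact this k (Finset.mem_univ k)
  ext k
  simp only [Equiv.Perm.one_apply]
  exact ZMod.val_injective n (heq k).symm

lemma dom_refl (σ : Equiv.Perm (ZMod n)) : Dom σ σ := fun _ _ => le_refl _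

lemma dom_trans {τ ρ σ : Equiv.Perm (ZMod n)} (h1 : Dom τ ρ) (h2 : Dom ρ σ) : Dom τ σ :=
  fun a b => le_trans (h2 a b) (h1 a b)

/-- Hard direction: dominance implies the subword-Bruhat relation. -/
lemma dom_to_bruhat : ∀ σ τ : Equiv.Perm (ZMod n), Dom τ σ → BruhatLE n τ σ := by
  suffices H : ∀ m : ℕ, ∀ σ τ : Equiv.Perm (ZMod n), (invZ σ).toNat = m → Dom τ σ →
      BruhatLE n τ σ by
    intro σ τ h; exact H _ σ τ rfl h
  intro m
  induction m using Nat.strong_induction_on with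
  | _ m IH =>
    intro σ τ hm hdom
    by_cases h0 : invZ σ = 0
    · have hσ1 : σ = 1 := eq_one_of_invZ_eq_zero h0
      subst hσ1
      have hτ1 : τ = 1 := dom_one hdom
      subst hτ1
      refine ⟨[], [], ?_, ?_, List.Sublist.refl []⟩ <;>
        · rw [isReducedWord_iff]
          exact ⟨by simp, by simp, by simp [invZ_one]⟩
    · have hσ1 : σ ≠ 1 := fun h => h0 (h ▸ invZ_one)
      obtain ⟨p, hp, hd⟩ := exists_descent hσ1
      have hw : invZ (σ * (Equiv.swap p (p + 1))) = invZ σ - 1 := by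
        have := invZ_mul_swap hp σ
        rw [if_neg (by omega)] at this
        omega
      have hpos : 1 ≤ invZ σ := descent_invZ_pos hp hd
      have hsmall : (invZ (σ * (Equiv.swap p (p + 1)))).toNat < m := by
        have := invZ_nonneg (σ * (Equiv.swap p (p + 1)))
        omega
      have hτne : (τ p).val ≠ (τ (p + 1)).val :=
        val_ne_of_ne fun h => (p_ne_succ hp) (τ.injective h)
      by_cases hτ : (τ p).val < (τ (p + 1)).val
      · -- τ ascends at p
        have hdom' : Dom τ (σ * (Equiv.swap p (p + 1))) := dom_lift_mixed hp hdom hd hτ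
        obtain ⟨Lσ', Lτ, h1, h2, h3⟩ := IH _ hsmall (σ * (Equiv.swap p (p + 1))) τ rfl hdom'
        rw [isReducedWord_iff] at h1
        refine ⟨Lσ' ++ [(Equiv.swap p (p + 1))], Lτ, ?_, h2, h3.trans (List.sublist_append_left Lσ' [(Equiv.swap p (p + 1))])⟩
        rw [isReducedWord_iff]
        refine ⟨?_, ?_, ?_⟩
        · intro t ht
          rcases List.mem_append.1 ht with h | h
          · exact h1.1 t h
          · rw [List.mem_singleton.1 h]; exact ⟨p, p_ne_top hp, rfl⟩
        · rw [List.prod_append, List.prod_singleton, h1.2.1, mul_assoc,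
            Equiv.swap_mul_self, mul_one]
        · rw [List.length_append, List.length_singleton]
          push_cast
          have hxx := h1.2.2; omega
      · -- τ descends at p
        have hτd : (τ (p + 1)).val < (τ p).val := by omega
        have hdom' : Dom (τ * (Equiv.swap p (p + 1))) (σ * (Equiv.swap p (p + 1))) :=
          dom_lift_same hp hdom (iff_of_false (by omega) (by omega))
        have hwτ : invZ (τ * (Equiv.swap p (p + 1))) = invZ τ - 1 := by
          have := invZ_mul_swap hp τ
          rw [if_neg (by omega)] at this
          omega
        obtain ⟨Lσ', Lτ', h1, h2, h3⟩ := IH _ hsmall (σ * (Equiv.swap p (p + 1))) (τ * (Equiv.swap p (p + 1))) rfl hdom'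
        rw [isReducedWord_iff] at h1 h2
        refine ⟨Lσ' ++ [(Equiv.swap p (p + 1))], Lτ' ++ [(Equiv.swap p (p + 1))], ?_, ?_, List.Sublist.append h3 (List.Sublist.refl [(Equiv.swap p (p + 1))])⟩
        · rw [isReducedWord_iff]
          refine ⟨?_, ?_, ?_⟩
          · intro t ht
            rcases List.mem_append.1 ht with h | h
            · exact h1.1 t h
            · rw [List.mem_singleton.1 h]; exact ⟨p, p_ne_top hp, rfl⟩
          · rw [List.prod_append, List.prod_singleton, h1.2.1, mul_assoc,
              Equiv.swap_mul_self, mul_one]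
          · rw [List.length_append, List.length_singleton]
            push_cast
            have hxx := h1.2.2; omega
        · rw [isReducedWord_iff]
          refine ⟨?_, ?_, ?_⟩
          · intro t ht
            rcases List.mem_append.1 ht with h | h
            · exact h2.1 t h
            · rw [List.mem_singleton.1 h]; exact ⟨p, p_ne_top hp, rfl⟩
          · rw [List.prod_append, List.prod_singleton, h2.2.1, mul_assoc,
              Equiv.swap_mul_self, mul_one]
          · rw [List.length_append, List.length_singleton]
            push_cast
            have hxx := h2.2.2; omega

/-- Easy direction, word form: a reduced subword dominates. -/
lemma word_dom : ∀ Lσ : List (Equiv.Perm (ZMod n)), (∀ t ∈ Lσ, IsAdjTrans n t) →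
    ((Lσ.length : ℤ) = invZ Lσ.prod) →
    ∀ Lτ : List (Equiv.Perm (ZMod n)), (∀ t ∈ Lτ, IsAdjTrans n t) →
      ((Lτ.length : ℤ) = invZ Lτ.prod) → Lτ.Sublist Lσ → Dom Lτ.prod Lσ.prod := by
  intro Lσ
  induction Lσ using List.reverseRecOn with
  | nil =>
    intro _ _ Lτ _ _ hsub
    rw [List.sublist_nil.1 hsub]
    exact dom_refl _
  | append_singleton L t IHL =>
    intro hadj hlen Lτ hτadj hτlen hsub
    obtain ⟨p, hpt, rfl⟩ := hadj t (List.mem_append_right _ (List.mem_singleton_self t))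
    have hp := p_lt_of_ne_top hpt
    have hadjL : ∀ u ∈ L, IsAdjTrans n u := fun u hu => hadj u (List.mem_append_left _ hu)
    rw [List.prod_append, List.prod_singleton] at hlen ⊢
    rw [List.length_append, List.length_singleton] at hlen
    have hwσ := invZ_mul_swap hp L.prod
    have hW3 := invZ_le_word_length L hadjL
    have hasc : (L.prod p).val < (L.prod (p + 1)).val := by
      by_contra hc
      rw [if_neg hc] at hwσ
      push_cast at hlen
      omega
    rw [if_pos hasc] at hwσ
    have hLlen : (L.length : ℤ) = invZ L.prod := by push_cast at hlen; omega
    have hcov : Dom L.prod (L.prod * Equiv.swap p (p + 1)) := dom_cover hp hasc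
    rw [List.sublist_append_iff] at hsub
    obtain ⟨l₁, l₂, rfl, h₁, h₂⟩ := hsub
    have hl₁adj : ∀ u ∈ l₁, IsAdjTrans n u := fun u hu => hadjL u (h₁.subset hu)
    rcases List.sublist_singleton.1 h₂ with rfl | rfl
    · rw [List.append_nil] at hτadj hτlen ⊢
      exact dom_trans (IHL hadjL hLlen l₁ hτadj hτlen h₁) hcov
    · rw [List.prod_append, List.prod_singleton] at hτlen ⊢
      rw [List.length_append, List.length_singleton] at hτlen
      have hwτ := invZ_mul_swap hp l₁.prod
      have hW3τ := invZ_le_word_length l₁ hl₁adj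
      have hascτ : (l₁.prod p).val < (l₁.prod (p + 1)).val := by
        by_contra hc
        rw [if_neg hc] at hwτ
        push_cast at hτlen
        omega
      have hl₁len : (l₁.length : ℤ) = invZ l₁.prod := by
        rw [if_pos hascτ] at hwτ
        push_cast at hτlen
        omega
      exact dom_lift_same hp (IHL hadjL hLlen l₁ hl₁adj hl₁len h₁)
        (iff_of_true hasc hascτ)

lemma bruhat_to_dom {σ τ : Equiv.Perm (ZMod n)} (h : BruhatLE n τ σ) : Dom τ σ := by
  obtain ⟨Lσ, Lτ, h1, h2, h3⟩ := h
  rw [isReducedWord_iff] at h1 h2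
  have := word_dom Lσ h1.1 (by rw [h1.2.1]; exact h1.2.2) Lτ h2.1
    (by rw [h2.2.1]; exact h2.2.2) h3
  rwa [h1.2.1, h2.2.1] at this

end Words

end GridBruhat

/-- The partial order `≼` on grid states is the opposite of the Bruhat order: there is a
positive domain `D ∈ 𝒟⁺(τ, σ)` with `A(D) = 0` and `B(D) = 0` iff `τ ≤_B σ`. -/
theorem gridLE_iff_bruhat (n : ℕ) (hn : 1 ≤ n) (σ τ : Equiv.Perm (ZMod n)) :
    (∃ D : ZMod n → ZMod n → ℤ,
        IsGridPosDomain n τ σ D ∧ colA n D = 0 ∧ rowB n D = 0) ↔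
      BruhatLE n τ σ := by
  haveI : NeZero n := ⟨by omega⟩
  rw [GridBruhat.lhs_iff_dom]
  constructor
  · exact GridBruhat.dom_to_bruhat σ τ
  · exact GridBruhat.bruhat_to_dom
end

section
/- For every natural number N ≥ 2, the coarsening complex on compositions of N is acyclic: LinearMap.ker d = LinearMap.range d. -/
/-- The elementary coarsening of a composition, combining the (0-indexed) `k`-th and
`(k+1)`-st parts. -/
def mergeAt {N : ℕ} (c : Composition N) (k : ℕ) (hk : k + 1 < c.blocks.length) :
    Composition N where
  blocks := c.blocks.take k ++
    (c.blocks[k]'(Nat.lt_of_succ_lt hk) + c.blocks[k + 1]'hk) :: c.blocks.drop (k + 2)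
  blocks_pos := by
    intro i hi
    rcases List.mem_append.1 hi with h | h
    · exact c.blocks_pos (List.take_subset _ _ h)
    · rcases List.mem_cons.1 h with h | h
      · subst h
        exact Nat.add_pos_left (c.blocks_pos (List.getElem_mem _)) _
      · exact c.blocks_pos (List.drop_subset _ _ h)
  blocks_sum := by
    have h2 : c.blocks.drop k =
        c.blocks[k]'(Nat.lt_of_succ_lt hk) :: c.blocks.drop (k + 1) :=
      List.drop_eq_getElem_cons (Nat.lt_of_succ_lt hk)
    have h3 : c.blocks.drop (k + 1) = c.blocks[k + 1]'hk :: c.blocks.drop (k + 2) :=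
      List.drop_eq_getElem_cons hk
    have h4 := c.blocks_sum
    rw [← List.take_append_drop k c.blocks, h2, h3] at h4
    simp only [List.sum_append, List.sum_cons] at h4 ⊢
    omega

/-- The Type III (coarsening) differential on the free `ℤ`-module on compositions of `N`:
`d(c) = Σ_{k=1}^{length(c)-1} (-1)^k • merge_k(c)` (indexed here from `0`). -/
noncomputable def coarseD (N : ℕ) :
    ((Composition N) →₀ ℤ) →ₗ[ℤ] ((Composition N) →₀ ℤ) :=
  Finsupp.lift ((Composition N) →₀ ℤ) ℤ (Composition N) fun c =>
    ∑ k ∈ Finset.range (c.blocks.length - 1),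
      if h : k + 1 < c.blocks.length then
        ((-1 : ℤ) ^ (k + 1)) • Finsupp.single (mergeAt c k h) (1 : ℤ)
      else 0


/-! ### List-level lemmas -/

def mergeL : List ℕ → ℕ → List ℕ
  | a :: b :: t, 0 => (a + b) :: t
  | a :: t, (k+1) => a :: mergeL t k
  | l, _ => l

def splitL : List ℕ → List ℕ
  | a :: t => 1 :: (a - 1) :: t
  | [] => []

lemma mergeL_nil (k : ℕ) : mergeL [] k = [] := by cases k <;> rfl
lemma mergeL_single (a k : ℕ) : mergeL [a] k = [a] := by
  cases k with
  | zero => rfl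
  | succ k => simp [mergeL, mergeL_nil]

lemma mergeL_length (l : List ℕ) (k : ℕ) (hk : k + 1 < l.length) :
    (mergeL l k).length + 1 = l.length := by
  induction l generalizing k with
  | nil => simp at hk
  | cons a t ih =>
    cases k with
    | zero =>
      cases t with
      | nil => simp at hk
      | cons b t => simp [mergeL]
    | succ k =>
      simp only [List.length_cons, Nat.add_lt_add_iff_right] at hk
      simp [mergeL, ← ih k hk]

lemma mergeL_of_ge (l : List ℕ) (k : ℕ) (hk : l.length ≤ k + 1) : mergeL l k = l := by
  induction l generalizing k with
  | nil => exact mergeL_nil k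
  | cons a t ih =>
    cases k with
    | zero =>
      cases t with
      | nil => rfl
      | cons b t => simp at hk
    | succ k =>
      simp only [List.length_cons, Nat.add_le_add_iff_right] at hk
      simp [mergeL, ih k hk]

lemma mergeL_eq (l : List ℕ) (k : ℕ) (hk : k + 1 < l.length) :
    mergeL l k = l.take k ++ (l[k]'(Nat.lt_of_succ_lt hk) + l[k+1]'hk) :: l.drop (k+2) := by
  induction l generalizing k with
  | nil => simp at hk
  | cons a t ih =>
    cases k with
    | zero =>
      cases t with
      | nil => simp at hk
      | cons b t => simp [mergeL]
    | succ k =>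
      simp only [List.length_cons, Nat.add_lt_add_iff_right] at hk
      simp [mergeL, ih k hk]

lemma mergeL_comm (j k : ℕ) (l : List ℕ) (h : j ≤ k) :
    mergeL (mergeL l (k+1)) j = mergeL (mergeL l j) k := by
  induction j generalizing l k with
  | zero =>
    match l with
    | [] => simp [mergeL_nil]
    | [a] => simp [mergeL_single, mergeL_nil, mergeL]
    | a :: b :: t =>
      cases k with
      | zero =>
        match t with
        | [] => simp [mergeL, mergeL_single, mergeL_nil]
        | c :: t' => simp [mergeL]; omega
      | succ k =>
        match t with
        | [] => simp [mergeL, mergeL_single, mergeL_nil]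
        | c :: t' => simp [mergeL]
  | succ j ih =>
    obtain ⟨k', rfl⟩ : ∃ k', k = k' + 1 := ⟨k - 1, by omega⟩
    match l with
    | [] => simp [mergeL_nil]
    | a :: t =>
      simp only [mergeL]
      exact congrArg _ (ih k' t (by omega))

lemma headI_le_mergeL (l : List ℕ) (k : ℕ) : l.headI ≤ (mergeL l k).headI := by
  match l, k with
  | [], k => simp [mergeL_nil]
  | [a], k => simp [mergeL_single]
  | a :: b :: t, 0 => simp [mergeL]
  | a :: b :: t, (k+1) => simp [mergeL]

lemma mergeL_splitL (a : ℕ) (t : List ℕ) (ha : 1 ≤ a) (k : ℕ) :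
    mergeL (splitL (a :: t)) (k + 1) = splitL (mergeL (a :: t) k) := by
  match t, k with
  | [], k => simp [splitL, mergeL_single, mergeL, mergeL_nil]
  | b :: t, 0 => simp [splitL, mergeL]; omega
  | b :: t, (k+1) => simp [splitL, mergeL]

lemma splitL_mergeL_zero (b : ℕ) (t : List ℕ) :
    splitL (mergeL (1 :: b :: t) 0) = 1 :: b :: t := by
  simp [splitL, mergeL]

/-! ### Composition-level -/

variable {N : ℕ}

lemma mergeAt_blocks (c : Composition N) (k : ℕ) (hk : k + 1 < c.blocks.length) :
    (mergeAt c k hk).blocks = mergeL c.blocks k := (mergeL_eq _ _ hk).symm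

/-- Total version of `mergeAt`. -/
def mergeC (c : Composition N) (k : ℕ) : Composition N :=
  if h : k + 1 < c.blocks.length then mergeAt c k h else c

lemma mergeC_blocks (c : Composition N) (k : ℕ) :
    (mergeC c k).blocks = mergeL c.blocks k := by
  unfold mergeC
  split
  · exact mergeAt_blocks c k ‹_›
  · exact (mergeL_of_ge _ _ (by omega)).symm

lemma mergeAt_eq_mergeC (c : Composition N) (k : ℕ) (hk : k + 1 < c.blocks.length) :
    mergeAt c k hk = mergeC c k := by
  rw [mergeC, dif_pos hk]

lemma mergeC_length (c : Composition N) (k : ℕ) (hk : k + 1 < c.blocks.length) :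
    (mergeC c k).blocks.length + 1 = c.blocks.length := by
  rw [mergeC_blocks]; exact mergeL_length _ _ hk

lemma mergeC_comm (c : Composition N) (j k : ℕ) (h : j ≤ k) :
    mergeC (mergeC c (k+1)) j = mergeC (mergeC c j) k := by
  apply Composition.ext
  simp only [mergeC_blocks]
  exact mergeL_comm j k c.blocks h

lemma blocks_ne_nil (c : Composition N) (hN : 0 < N) : c.blocks ≠ [] := by
  intro h
  have := c.blocks_sum
  rw [h] at this
  simp at this
  omega

lemma headI_pos (c : Composition N) (hN : 0 < N) : 0 < c.blocks.headI := by
  have h := blocks_ne_nil c hN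
  match hb : c.blocks, h with
  | a :: t, _ =>
    have : a ∈ c.blocks := by rw [hb]; exact List.mem_cons_self
    simpa using c.blocks_pos this

/-- Split the first block of `c` into `1` and `headI - 1`. -/
def splitC (c : Composition N) (h : 2 ≤ c.blocks.headI) : Composition N where
  blocks := splitL c.blocks
  blocks_pos := by
    have hne : c.blocks ≠ [] := by
      intro he; rw [he] at h; simp at h
    intro i hi
    match hb : c.blocks, hne with
    | a :: t, _ =>
      rw [hb] at hi h
      simp only [splitL, List.mem_cons] at hi
      simp only [List.headI] at h
      rcases hi with rfl | rfl | hi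
      · omega
      · omega
      · exact c.blocks_pos (by rw [hb]; exact List.mem_cons_of_mem _ hi)
  blocks_sum := by
    have hne : c.blocks ≠ [] := by
      intro he; rw [he] at h; simp at h
    have hs := c.blocks_sum
    match hb : c.blocks, hne with
    | a :: t, _ =>
      rw [hb] at hs h
      simp only [List.headI] at h
      simp only [splitL, List.sum_cons] at hs ⊢
      omega

lemma splitC_blocks (c : Composition N) (h : 2 ≤ c.blocks.headI) :
    (splitC c h).blocks = splitL c.blocks := rfl

lemma lift_single (f : Composition N → ((Composition N) →₀ ℤ)) (c : Composition N) :
    Finsupp.lift ((Composition N) →₀ ℤ) ℤ (Composition N) f (Finsupp.single c 1) = f c := by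
  simp [Finsupp.lift_apply, Finsupp.sum_single_index]

lemma coarseD_single (c : Composition N) :
    coarseD N (Finsupp.single c (1 : ℤ)) =
      ∑ k ∈ Finset.range (c.blocks.length - 1),
        ((-1 : ℤ) ^ (k + 1)) • Finsupp.single (mergeC c k) (1 : ℤ) := by
  rw [coarseD, lift_single]
  refine Finset.sum_congr rfl fun k hk => ?_
  have hk' : k + 1 < c.blocks.length := by
    have := Finset.mem_range.1 hk; omega
  rw [dif_pos hk', mergeAt_eq_mergeC]

lemma coarseD_sq (c : Composition N) :
    coarseD N (coarseD N (Finsupp.single c (1 : ℤ))) = 0 := by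
  rw [coarseD_single, map_sum]
  simp only [map_smul, coarseD_single]
  set m := c.blocks.length with hm
  have step : ∀ k ∈ Finset.range (m - 1),
      ((-1 : ℤ) ^ (k + 1)) • ∑ j ∈ Finset.range ((mergeC c k).blocks.length - 1),
          ((-1 : ℤ) ^ (j + 1)) • Finsupp.single (mergeC (mergeC c k) j) (1 : ℤ) =
      ∑ j ∈ Finset.range (m - 2),
          ((-1 : ℤ) ^ (k + j)) • Finsupp.single (mergeC (mergeC c k) j) (1 : ℤ) := by
    intro k hk
    have hk' : k + 1 < m := by have := Finset.mem_range.1 hk; omega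
    have hlen : (mergeC c k).blocks.length - 1 = m - 2 := by
      have := mergeC_length c k hk'; omega
    rw [hlen, Finset.smul_sum]
    refine Finset.sum_congr rfl fun j hj => ?_
    rw [smul_smul, ← pow_add, show k + 1 + (j + 1) = (k + j) + 2 by omega, pow_add]
    norm_num
  rw [Finset.sum_congr rfl step, ← Finset.sum_product']
  refine Finset.sum_involution
    (fun p _ => if p.2 < p.1 then (p.2, p.1 - 1) else (p.2 + 1, p.1)) ?_ ?_ ?_ ?_
  · rintro ⟨k, j⟩ ha
    simp only
    by_cases hlt : j < k
    · rw [if_pos hlt]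
      obtain ⟨k', rfl⟩ : ∃ k', k = k' + 1 := ⟨k - 1, by omega⟩
      have hcomm := mergeC_comm c j k' (by omega)
      simp only [Nat.add_sub_cancel]
      rw [hcomm, show (-1 : ℤ) ^ (k' + 1 + j) = -(-1 : ℤ) ^ (j + k') by
        rw [show k' + 1 + j = (j + k') + 1 by omega, pow_succ]; ring]
      rw [neg_smul, neg_add_cancel]
    · rw [if_neg hlt]
      have hcomm := mergeC_comm c k j (by omega)
      simp only
      rw [hcomm, show (-1 : ℤ) ^ (j + 1 + k) = -(-1 : ℤ) ^ (k + j) by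
        rw [show j + 1 + k = (k + j) + 1 by omega, pow_succ]; ring]
      rw [neg_smul, add_neg_cancel]
  · rintro ⟨k, j⟩ ha _
    simp only
    by_cases hlt : j < k
    · rw [if_pos hlt]
      intro h
      rw [Prod.mk.injEq] at h
      omega
    · rw [if_neg hlt]
      intro h
      rw [Prod.mk.injEq] at h
      omega
  · rintro ⟨k, j⟩ ha
    simp only [Finset.mem_product, Finset.mem_range] at ha ⊢
    by_cases hlt : j < k
    · rw [if_pos hlt]; simp only [Finset.mem_product, Finset.mem_range]; omega
    · rw [if_neg hlt]; simp only [Finset.mem_product, Finset.mem_range]; omega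
  · rintro ⟨k, j⟩ ha
    simp only
    by_cases hlt : j < k
    · rw [if_pos hlt]
      rw [if_neg (by omega)]
      exact Prod.ext (by omega) rfl
    · rw [if_neg hlt]
      rw [if_pos (by omega)]
      simp

/-- The contracting homotopy: split the first block as `1 + (rest)`. -/
noncomputable def homH (N : ℕ) :
    ((Composition N) →₀ ℤ) →ₗ[ℤ] ((Composition N) →₀ ℤ) :=
  Finsupp.lift ((Composition N) →₀ ℤ) ℤ (Composition N) fun c =>
    if h : 2 ≤ c.blocks.headI then -Finsupp.single (splitC c h) (1 : ℤ) else 0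

lemma homH_single (c : Composition N) :
    homH N (Finsupp.single c (1 : ℤ)) =
      if h : 2 ≤ c.blocks.headI then -Finsupp.single (splitC c h) (1 : ℤ) else 0 :=
  lift_single _ c

lemma mergeC_headI (c : Composition N) (k : ℕ) :
    c.blocks.headI ≤ (mergeC c k).blocks.headI := by
  rw [mergeC_blocks]; exact headI_le_mergeL _ _

lemma splitC_length (c : Composition N) (h : 2 ≤ c.blocks.headI) :
    (splitC c h).blocks.length = c.blocks.length + 1 := by
  have hne : c.blocks ≠ [] := fun he => by rw [he] at h; simp at h
  rw [splitC_blocks]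
  match hb : c.blocks, hne with
  | a :: t, _ => simp [splitL]

lemma mergeC_splitC_zero (c : Composition N) (h : 2 ≤ c.blocks.headI) :
    mergeC (splitC c h) 0 = c := by
  have hne : c.blocks ≠ [] := fun he => by rw [he] at h; simp at h
  apply Composition.ext
  rw [mergeC_blocks, splitC_blocks]
  match hb : c.blocks, hne with
  | a :: t, _ =>
    rw [hb] at h
    simp only [List.headI] at h
    simp only [splitL, mergeL]
    congr 1
    omega

lemma mergeC_splitC (c : Composition N) (h : 2 ≤ c.blocks.headI) (k : ℕ)
    (h2 : 2 ≤ (mergeC c k).blocks.headI) :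
    mergeC (splitC c h) (k + 1) = splitC (mergeC c k) h2 := by
  have hne : c.blocks ≠ [] := fun he => by rw [he] at h; simp at h
  apply Composition.ext
  rw [mergeC_blocks, splitC_blocks, splitC_blocks, mergeC_blocks]
  match hb : c.blocks, hne with
  | a :: t, _ =>
    rw [hb] at h
    simp only [List.headI] at h
    exact mergeL_splitL a t (by omega) k

lemma key_case2 (c : Composition N) (h : 2 ≤ c.blocks.headI) :
    coarseD N (homH N (Finsupp.single c (1 : ℤ))) +
      homH N (coarseD N (Finsupp.single c (1 : ℤ))) = Finsupp.single c (1 : ℤ) := by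
  have hne : c.blocks ≠ [] := fun he => by rw [he] at h; simp at h
  obtain ⟨n, hn⟩ : ∃ n, c.blocks.length = n + 1 :=
    ⟨c.blocks.length - 1, by have := List.length_pos_iff.2 hne; omega⟩
  have h2 : ∀ k, 2 ≤ (mergeC c k).blocks.headI := fun k => le_trans h (mergeC_headI c k)
  rw [homH_single, dif_pos h, map_neg, coarseD_single, splitC_length c h, hn]
  rw [show n + 1 + 1 - 1 = n + 1 by omega]
  rw [Finset.sum_range_succ', mergeC_splitC_zero c h]
  have hrw : ∀ k ∈ Finset.range n,
      ((-1 : ℤ) ^ (k + 1 + 1)) • Finsupp.single (mergeC (splitC c h) (k + 1)) (1 : ℤ) =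
      ((-1 : ℤ) ^ k) • Finsupp.single (splitC (mergeC c k) (h2 k)) (1 : ℤ) := by
    intro k _
    rw [mergeC_splitC c h k (h2 k)]
    congr 1
    rw [show k + 1 + 1 = k + 2 by omega, pow_add]
    norm_num
  rw [Finset.sum_congr rfl hrw, coarseD_single, map_sum]
  have hrw2 : ∀ k ∈ Finset.range (c.blocks.length - 1),
      homH N (((-1 : ℤ) ^ (k + 1)) • Finsupp.single (mergeC c k) (1 : ℤ)) =
      ((-1 : ℤ) ^ k) • Finsupp.single (splitC (mergeC c k) (h2 k)) (1 : ℤ) := by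
    intro k _
    rw [map_smul, homH_single, dif_pos (h2 k), smul_neg, ← neg_smul]
    congr 1
    rw [pow_succ]
    ring
  rw [Finset.sum_congr rfl hrw2, hn, show n + 1 - 1 = n by omega]
  simp only [zero_add, pow_one, neg_smul, one_smul]
  abel

lemma key_case1 (c : Composition N) (hN : 2 ≤ N) (h1 : c.blocks.headI = 1) :
    coarseD N (homH N (Finsupp.single c (1 : ℤ))) +
      homH N (coarseD N (Finsupp.single c (1 : ℤ))) = Finsupp.single c (1 : ℤ) := by
  have hne : c.blocks ≠ [] := blocks_ne_nil c (by omega)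
  -- blocks have the form 1 :: b :: t
  obtain ⟨b, t, hb⟩ : ∃ b t, c.blocks = 1 :: b :: t := by
    have hs := c.blocks_sum
    match hcb : c.blocks, hne with
    | [a], _ =>
      rw [hcb] at hs h1
      simp only [List.headI] at h1
      simp only [List.sum_cons, List.sum_nil] at hs
      omega
    | a :: b :: t, _ =>
      rw [hcb] at h1
      simp only [List.headI] at h1
      exact ⟨b, t, by rw [h1]⟩
  have hbpos : 0 < b := c.blocks_pos (by rw [hb]; simp)
  rw [homH_single, dif_neg (by rw [h1]; omega), map_zero, zero_add]
  rw [coarseD_single, map_sum]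
  have hlen : c.blocks.length - 1 = t.length + 1 := by rw [hb]; simp
  rw [hlen]
  have hterm0 : homH N (((-1 : ℤ) ^ (0 + 1)) • Finsupp.single (mergeC c 0) (1 : ℤ)) =
      Finsupp.single c (1 : ℤ) := by
    have hm0 : (mergeC c 0).blocks = (1 + b) :: t := by
      rw [mergeC_blocks, hb]; rfl
    have h2 : 2 ≤ (mergeC c 0).blocks.headI := by rw [hm0]; simp; omega
    have hsp : splitC (mergeC c 0) h2 = c := by
      apply Composition.ext
      rw [splitC_blocks, hm0, hb]
      simpa [mergeL] using splitL_mergeL_zero b t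
    rw [map_smul, homH_single, dif_pos h2, hsp]
    simp
  have hterms : ∀ k ∈ Finset.range (t.length + 1), k ≠ 0 →
      homH N (((-1 : ℤ) ^ (k + 1)) • Finsupp.single (mergeC c k) (1 : ℤ)) = 0 := by
    intro k _ hk0
    obtain ⟨k', rfl⟩ : ∃ k', k = k' + 1 := ⟨k - 1, by omega⟩
    have hhead : (mergeC c (k' + 1)).blocks.headI = 1 := by
      rw [mergeC_blocks, hb]
      rfl
    rw [map_smul, homH_single, dif_neg (by rw [hhead]; omega), smul_zero]
  rw [Finset.sum_eq_single_of_mem 0 (Finset.mem_range.2 (by omega)) hterms, hterm0]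

lemma homotopy_id (N : ℕ) (hN : 2 ≤ N) :
    (coarseD N) ∘ₗ (homH N) + (homH N) ∘ₗ (coarseD N) = LinearMap.id := by
  apply Finsupp.lhom_ext'
  intro c
  apply LinearMap.ext_ring
  simp only [LinearMap.coe_comp, Function.comp_apply, LinearMap.add_apply,
    LinearMap.id_coe, id_eq, LinearMap.comp_apply]
  by_cases h : 2 ≤ c.blocks.headI
  · exact key_case2 c h
  · have hp := headI_pos c (by omega)
    exact key_case1 c hN (by omega)


/-- For `N ≥ 2` the coarsening complex on compositions of `N` is acyclic. -/
theorem coarseD_ker_eq_range (N : ℕ) (hN : 2 ≤ N) :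
    LinearMap.ker (coarseD N) = LinearMap.range (coarseD N) := by
  apply le_antisymm
  · intro x hx
    have hid := homotopy_id N hN
    have := congrArg (fun f => f x) hid
    simp only [LinearMap.add_apply, LinearMap.comp_apply, LinearMap.id_apply] at this
    rw [LinearMap.mem_ker.1 hx, map_zero, add_zero] at this
    exact ⟨homH N x, this⟩
  · rintro _ ⟨y, rfl⟩
    rw [LinearMap.mem_ker]
    have hsq : (coarseD N) ∘ₗ (coarseD N) = 0 := by
      apply Finsupp.lhom_ext'
      intro c
      apply LinearMap.ext_ring
      simpa using coarseD_sq c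
    have := congrArg (fun f => f y) hsq
    simpa using this
end

section
/- The subset {(y₁ + y₂, x² + y₁·y₂, x·(y₁ − y₂)) : x, y₁, y₂ ∈ ℝ with y₁·y₂ = 0} of ℝ³ equals the Whitney umbrella W = {(a,b,c) ∈ ℝ³ : 0 ≤ b and a²·b = c²}. -/
/-!
If `y₁ y₂ = 0` the point is `(y, x², ±x y)`, which visibly satisfies `a² b = c²` with `b ≥ 0`.
Conversely, on the umbrella `c² = (a √b)²`, so `c = ±a √b`; taking `x = √b` and putting `a` in the
slot `y₁` or `y₂` according to the sign recovers the point.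
-/

lemma whitney_umbrella_of_mul_eq_zero {x y₁ y₂ : ℝ} (h : y₁ * y₂ = 0) :
    0 ≤ x ^ 2 + y₁ * y₂ ∧ (y₁ + y₂) ^ 2 * (x ^ 2 + y₁ * y₂) = (x * (y₁ - y₂)) ^ 2 := by
  rcases mul_eq_zero.mp h with rfl | rfl <;> exact ⟨by positivity, by ring⟩

lemma exists_param_of_whitney_umbrella {a b c : ℝ} (hb : 0 ≤ b) (h : a ^ 2 * b = c ^ 2) :
    ∃ x y₁ y₂ : ℝ, y₁ * y₂ = 0 ∧ (a, b, c) = (y₁ + y₂, x ^ 2 + y₁ * y₂, x * (y₁ - y₂)) := by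
  have hc : c ^ 2 = (√b * a) ^ 2 := by rw [mul_pow, Real.sq_sqrt hb, ← h, mul_comm]
  rcases sq_eq_sq_iff_eq_or_eq_neg.mp hc with hc | hc
  · exact ⟨√b, a, 0, mul_zero a, by simp [Real.sq_sqrt hb, hc]⟩
  · exact ⟨√b, 0, a, zero_mul a, by simp [Real.sq_sqrt hb, hc]⟩

/-- The locus in `Z₂ ≅ ℝ³` where at least one of the two points is real equals the
Whitney umbrella `W = {(a,b,c) : 0 ≤ b, a²b = c²}`. -/
theorem whitney_umbrella_param :
    {p : ℝ × ℝ × ℝ | ∃ x y₁ y₂ : ℝ, y₁ * y₂ = 0 ∧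
        p = (y₁ + y₂, x ^ 2 + y₁ * y₂, x * (y₁ - y₂))} =
      {p : ℝ × ℝ × ℝ | 0 ≤ p.2.1 ∧ p.1 ^ 2 * p.2.1 = p.2.2 ^ 2} := by
  ext ⟨a, b, c⟩
  constructor
  · rintro ⟨x, y₁, y₂, h, ⟨⟩⟩
    exact whitney_umbrella_of_mul_eq_zero h
  · rintro ⟨hb, h⟩
    exact exists_param_of_whitney_umbrella hb h
end

section
/- The map Φ : ℝ² → ℝ³ defined by Φ(α₁, α₂) = (α₁ + α₂, α₁·α₂ − 2, 2α₁ + α₂) is injective, infinitely differentiable, has injective Fréchet derivative at every point, is a proper map (preimages of compact sets are compact), and its range equals the graph {(a₁, a₂, b₂) ∈ ℝ³ : a₂ = 3a₁b₂ − 2a₁² − b₂² − 2}. In particular Φ is a proper smooth embedding of ℝ² in ℝ³. -/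
/-- The parametrization `Φ(α₁, α₂) = (α₁ + α₂, α₁α₂ − 2, 2α₁ + α₂)` of the surface
`ψ₂((ℝ² × ∂Π₂)/S₂) ⊂ ℝ³`. -/
noncomputable def umbrellaParam : ℝ × ℝ → ℝ × ℝ × ℝ :=
  fun α => (α.1 + α.2, α.1 * α.2 - 2, 2 * α.1 + α.2)

/-- Left inverse of `umbrellaParam`. -/
noncomputable def umbrellaInv : ℝ × ℝ × ℝ → ℝ × ℝ :=
  fun q => (q.2.2 - q.1, 2 * q.1 - q.2.2)

lemma umbrella_leftInv : Function.LeftInverse umbrellaInv umbrellaParam := by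
  intro α
  simp only [umbrellaParam, umbrellaInv]
  ext <;> ring

lemma umbrella_contDiff : ContDiff ℝ (⊤ : ℕ∞) umbrellaParam := by
  unfold umbrellaParam; fun_prop

lemma umbrellaInv_contDiff : ContDiff ℝ (⊤ : ℕ∞) umbrellaInv := by
  unfold umbrellaInv; fun_prop

/-- `Φ` is a proper smooth embedding of `ℝ²` into `ℝ³` with image the graph
`{a₂ = 3a₁b₂ − 2a₁² − b₂² − 2}`. -/
theorem umbrellaParam_proper_smooth_embedding :
    Function.Injective umbrellaParam ∧
    ContDiff ℝ (⊤ : ℕ∞) umbrellaParam ∧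
    (∀ p : ℝ × ℝ, Function.Injective (fderiv ℝ umbrellaParam p)) ∧
    IsProperMap umbrellaParam ∧
    Set.range umbrellaParam =
      {q : ℝ × ℝ × ℝ | q.2.1 = 3 * q.1 * q.2.2 - 2 * q.1 ^ 2 - q.2.2 ^ 2 - 2} := by
  refine ⟨umbrella_leftInv.injective, umbrella_contDiff, ?_, ?_, ?_⟩
  · intro p
    have hΦ : DifferentiableAt ℝ umbrellaParam p :=
      (umbrella_contDiff.differentiable (by simp)) p
    have hL : DifferentiableAt ℝ umbrellaInv (umbrellaParam p) :=
      (umbrellaInv_contDiff.differentiable (by simp)) _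
    have hcomp : fderiv ℝ (umbrellaInv ∘ umbrellaParam) p =
        (fderiv ℝ umbrellaInv (umbrellaParam p)).comp (fderiv ℝ umbrellaParam p) :=
      fderiv_comp p hL hΦ
    have hid : umbrellaInv ∘ umbrellaParam = id := funext umbrella_leftInv
    rw [hid, fderiv_id] at hcomp
    intro x y hxy
    have := congrArg (fderiv ℝ umbrellaInv (umbrellaParam p)) hxy
    simpa [← ContinuousLinearMap.comp_apply, ← hcomp] using this
  · exact (umbrella_leftInv.isClosedEmbedding umbrellaInv_contDiff.continuous
      umbrella_contDiff.continuous).isProperMap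
  · ext q
    simp only [Set.mem_range, Set.mem_setOf_eq]
    constructor
    · rintro ⟨α, rfl⟩
      simp only [umbrellaParam]; ring
    · intro h
      exact ⟨(q.2.2 - q.1, 2 * q.1 - q.2.2), by
        simp only [umbrellaParam]
        ext <;> simp <;> nlinarith [h]⟩
end
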